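/- arXiv:1811.10089 — 7 statements merged into one kernel-verified Lean document; each statement's English description precedes it below -/
import Mathlib

section
/- For a simple graph G, the maximum order of a connected component of G equals the degree in x of da(G; x, 1); moreover, if c is this maximum, the number of connected components of order c equals the coefficient of x^c in da(G; x, 1). -/
open Polynomial Finset

open scoped Classical

variable {V : Type*}

/-- `f_y(S) = min_{u ∈ S} (deg_S(u) - deg_{S̄}(u) + n)`, computed in ℕ as
`deg_S(u) + n - deg_{S̄}(u)` (no truncation occurs since `deg_{S̄}(u) ≤ n`). -/
noncomputable def fy [Fintype V] (G : SimpleGraph V) (S : Finset V) : ℕ :=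
  sInf ((fun u => (S.filter (fun v => G.Adj u v)).card + Fintype.card V
      - (Sᶜ.filter (fun v => G.Adj u v)).card) '' (S : Set V))

/-- The defensive alliance polynomial, as a polynomial in `x` (the outer variable)
with coefficients that are polynomials in `y`. -/
noncomputable def da [Fintype V] (G : SimpleGraph V) : Polynomial (Polynomial ℤ) :=
  ∑ S ∈ (Finset.univ : Finset V).powerset,
    if S.Nonempty ∧ (G.induce (S : Set V)).Connected then
      Polynomial.monomial S.card (Polynomial.monomial (fy G S) (1 : ℤ))
    else 0

open SimpleGraph in
lemma aux_subset_supp [Fintype V] {G : SimpleGraph V} {S : Finset V}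
    (hc : (G.induce (S : Set V)).Connected) {u : V} (hu : u ∈ S) :
    ↑S ⊆ (G.connectedComponentMk u).supp := by
  intro v hv
  have h := hc.preconnected ⟨u, hu⟩ ⟨v, hv⟩
  have h2 := h.map (SimpleGraph.Embedding.induce (S : Set V)).toHom
  simp only [ConnectedComponent.mem_supp_iff, ConnectedComponent.eq]
  exact h2.symm

open SimpleGraph in
lemma aux_supp_connected [Fintype V] {G : SimpleGraph V} (C : G.ConnectedComponent) :
    (G.induce C.supp).Connected := by
  obtain ⟨u, hu⟩ := C.exists_rep
  have hu' : G.connectedComponentMk u = C := hu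
  subst hu'
  apply G.induce_connected_of_patches u (by simp [ConnectedComponent.mem_supp_iff])
  intro v hv
  rw [ConnectedComponent.mem_supp_iff, ConnectedComponent.eq] at hv
  obtain ⟨p⟩ := hv
  refine ⟨{x | x ∈ p.support}, ?_, by simp, by simp, ?_⟩
  · intro w hw
    simp only [Set.mem_setOf_eq] at hw
    show w ∈ (G.connectedComponentMk u).supp
    rw [ConnectedComponent.mem_supp_iff, ConnectedComponent.eq]
    exact ⟨p.dropUntil w hw⟩
  · exact (p.connected_induce_support).preconnected _ _

lemma da_map_coeff [Fintype V] (G : SimpleGraph V) (k : ℕ) :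
    ((da G).map (Polynomial.evalRingHom (1 : ℤ))).coeff k
      = (((Finset.univ : Finset V).powerset).filter
          (fun S : Finset V => (S.Nonempty ∧ (G.induce (S : Set V)).Connected) ∧ S.card = k)).card := by
  rw [da, Polynomial.map_sum, Polynomial.finset_sum_coeff, Finset.card_filter]
  push_cast
  apply Finset.sum_congr rfl
  intro S _
  split_ifs with h1 h2 h3
  · simp [Polynomial.map_monomial, Polynomial.coeff_monomial, h2.2]
  · simp only [Polynomial.map_monomial, Polynomial.coeff_monomial]
    rw [if_neg]
    intro hk
    exact h2 ⟨h1, hk⟩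
  · exact absurd h3.1 h1
  · simp

open SimpleGraph in
/-- The maximum order of a connected component equals the degree in `x` of `da(G;x,1)`,
and the number of components of that maximum order is the corresponding coefficient. -/
theorem stmt6 [Fintype V] [Nonempty V] (G : SimpleGraph V) :
    (Finset.univ.sup (fun C : G.ConnectedComponent => Fintype.card C.supp))
        = ((da G).map (Polynomial.evalRingHom (1 : ℤ))).natDegree
    ∧ ((Finset.univ.filter (fun C : G.ConnectedComponent =>
          Fintype.card C.supp
            = ((da G).map (Polynomial.evalRingHom (1 : ℤ))).natDegree)).card : ℤ)
        = ((da G).map (Polynomial.evalRingHom (1 : ℤ))).coeff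
            (((da G).map (Polynomial.evalRingHom (1 : ℤ))).natDegree) := by
  set p := (da G).map (Polynomial.evalRingHom (1 : ℤ)) with hp
  set c := Finset.univ.sup (fun C : G.ConnectedComponent => Fintype.card C.supp) with hc
  have hcard : ∀ (C : G.ConnectedComponent), C.supp.toFinset.card = Fintype.card C.supp :=
    fun C => Set.toFinset_card _
  have hsupc : ∀ (C : G.ConnectedComponent), Fintype.card C.supp ≤ c := by
    intro C
    rw [hc]
    exact Finset.le_sup (f := fun C : G.ConnectedComponent => Fintype.card C.supp) (Finset.mem_univ C)
  have key : ∀ S : Finset V, (G.induce (S : Set V)).Connected →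
      ∀ u ∈ S, S ⊆ (G.connectedComponentMk u).supp.toFinset ∧ S.card ≤ c := by
    intro S hco u hu
    have hsub : ↑S ⊆ (G.connectedComponentMk u).supp := aux_subset_supp hco hu
    have hsub' : S ⊆ (G.connectedComponentMk u).supp.toFinset :=
      fun v hv => Set.mem_toFinset.mpr (hsub hv)
    refine ⟨hsub', ?_⟩
    calc S.card ≤ (G.connectedComponentMk u).supp.toFinset.card := Finset.card_le_card hsub'
      _ = Fintype.card (G.connectedComponentMk u).supp := hcard _
      _ ≤ c := hsupc _
  -- coefficients above c vanish
  have hzero : ∀ m, c < m → p.coeff m = 0 := by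
    intro m hm
    rw [hp, da_map_coeff]
    norm_cast
    rw [Finset.card_eq_zero, Finset.filter_eq_empty_iff]
    rintro S _ ⟨⟨hne, hco⟩, hcd⟩
    obtain ⟨u, hu⟩ := hne
    have := (key S hco u hu).2
    omega
  -- c is attained
  haveI : Nonempty G.ConnectedComponent := ⟨G.connectedComponentMk (Classical.arbitrary V)⟩
  obtain ⟨C0, -, hC0⟩ := Finset.exists_mem_eq_sup (Finset.univ : Finset G.ConnectedComponent)
    Finset.univ_nonempty (fun C : G.ConnectedComponent => Fintype.card C.supp)
  -- supp of a component, as a finset, is a connected nonempty set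
  have hmem : ∀ (C : G.ConnectedComponent), Fintype.card C.supp = c →
      C.supp.toFinset ∈ ((Finset.univ : Finset V).powerset).filter
        (fun S : Finset V => (S.Nonempty ∧ (G.induce (S : Set V)).Connected) ∧ S.card = c) := by
    intro C hCc
    rw [Finset.mem_filter]
    refine ⟨Finset.mem_powerset.mpr (Finset.subset_univ _), ⟨⟨?_, ?_⟩, ?_⟩⟩
    · obtain ⟨u, hu⟩ := C.exists_rep
      exact ⟨u, Set.mem_toFinset.mpr (by rw [ConnectedComponent.mem_supp_iff]; exact hu)⟩
    · have : ((C.supp.toFinset : Finset V) : Set V) = C.supp := Set.coe_toFinset _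
      rw [this]
      exact aux_supp_connected C
    · rw [hcard, hCc]
  have hne0 : p.coeff c ≠ 0 := by
    rw [hp, da_map_coeff]
    have : C0.supp.toFinset ∈ _ := hmem C0 hC0.symm
    have hpos := Finset.card_pos.mpr ⟨_, this⟩
    positivity
  have hdeg : p.natDegree = c := by
    have h1 : p.natDegree ≤ c := Polynomial.natDegree_le_iff_coeff_eq_zero.mpr hzero
    have h2 : c ≤ p.natDegree := Polynomial.le_natDegree_of_ne_zero hne0
    omega
  refine ⟨hdeg.symm, ?_⟩
  rw [hdeg, hp, da_map_coeff]
  norm_cast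
  apply Finset.card_bij (fun C _ => C.supp.toFinset)
  · intro C hC
    exact hmem C (Finset.mem_filter.mp hC).2
  · intro C1 h1 C2 h2 h
    exact SimpleGraph.ConnectedComponent.supp_injective (by simpa [Set.toFinset_inj] using h)
  · intro S hS
    rw [Finset.mem_filter] at hS
    obtain ⟨-, ⟨⟨hne, hco⟩, hcd⟩⟩ := hS
    obtain ⟨u, hu⟩ := hne
    obtain ⟨hsub, -⟩ := key S hco u hu
    set C := G.connectedComponentMk u with hC
    have hle : C.supp.toFinset.card ≤ S.card := by
      rw [hcard, hcd]; exact hsupc C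
    have hSeq : S = C.supp.toFinset := Finset.eq_of_subset_of_card_le hsub hle
    have hCc : Fintype.card C.supp = c := by
      rw [← hcard, ← hSeq, hcd]
    exact ⟨C, Finset.mem_filter.mpr ⟨Finset.mem_univ _, hCc⟩, hSeq.symm⟩
end

section
/- If G₁, …, G_k are pairwise disjoint simple graphs and G is their disjoint union, then da(G; x, y) = (Σ_{i=1}^{k} da(G_i; x, y) / y^{|G_i|}) · y^{Σ_{i=1}^{k}|G_i|}, where |G_i| is the number of vertices of G_i. Equivalently, da(G; x, y) = Σ_i da(G_i; x, y) · y^{n − |G_i|} with n = Σ_i |G_i|. -/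
set_option maxHeartbeats 1000000
open Polynomial Finset

open scoped Classical

variable {V : Type*}

/-- The disjoint union of a family of simple graphs. -/
def disjointUnion {k : ℕ} {W : Fin k → Type*} (G : ∀ i, SimpleGraph (W i)) :
    SimpleGraph (Σ i, W i) :=
  SimpleGraph.fromRel (fun a b =>
    ∃ (i : Fin k) (u v : W i), (G i).Adj u v ∧ a = ⟨i, u⟩ ∧ b = ⟨i, v⟩)

section Aux

variable {k : ℕ} {W : Fin k → Type*}

lemma adj_fst (G : ∀ i, SimpleGraph (W i)) {a b : Σ i, W i}
    (h : (disjointUnion G).Adj a b) : a.1 = b.1 := by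
  rcases h with ⟨hne, (⟨i,u,v,hadj,rfl,rfl⟩|⟨i,u,v,hadj,rfl,rfl⟩)⟩ <;> rfl

lemma adj_mk (G : ∀ i, SimpleGraph (W i)) {i : Fin k} {u v : W i} :
    (disjointUnion G).Adj ⟨i,u⟩ ⟨i,v⟩ ↔ (G i).Adj u v := by
  constructor
  · rintro ⟨hne, (⟨j,u',v',hadj,h1,h2⟩|⟨j,u',v',hadj,h2,h1⟩)⟩ <;>
    · obtain ⟨rfl, h1'⟩ := Sigma.mk.inj_iff.mp h1
      obtain ⟨-, h2'⟩ := Sigma.mk.inj_iff.mp h2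
      rw [eq_of_heq h1', eq_of_heq h2']
      first | exact hadj | exact hadj.symm
  · intro h
    exact ⟨by simp [Sigma.mk.inj_iff, h.ne], Or.inl ⟨i, u, v, h, rfl, rfl⟩⟩

lemma fst_eq_of_reachable (G : ∀ i, SimpleGraph (W i)) {s : Set (Σ i, W i)}
    {a b : s} (h : ((disjointUnion G).induce s).Reachable a b) :
    (a : Σ i, W i).1 = (b : Σ i, W i).1 := by
  obtain ⟨w⟩ := h
  induction w with
  | nil => rfl
  | cons hadj _ ih =>
      exact (adj_fst G (by simpa using hadj)).trans ih

def emb (i : Fin k) : W i ↪ Σ i, W i := ⟨Sigma.mk i, sigma_mk_injective⟩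

noncomputable def fiberIso (G : ∀ i, SimpleGraph (W i)) (i : Fin k) (S : Finset (W i)) :
    (G i).induce (S : Set (W i)) ≃g (disjointUnion G).induce ((S.map (emb i) : Finset (Σ i, W i)) : Set (Σ i, W i)) where
  toEquiv := Equiv.ofBijective
    (fun u => ⟨⟨i, u.1⟩, by simp only [Finset.coe_map, Set.mem_image, Finset.mem_coe]; exact ⟨u.1, u.2, rfl⟩⟩)
    (by
      constructor
      · rintro ⟨u, hu⟩ ⟨v, hv⟩ h
        simp only [Subtype.mk.injEq, Sigma.mk.inj_iff] at h
        exact Subtype.ext (eq_of_heq h.2)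
      · rintro ⟨a, ha⟩
        simp only [Finset.coe_map, Set.mem_image, Finset.mem_coe] at ha
        obtain ⟨u, hu, rfl⟩ := ha
        exact ⟨⟨u, hu⟩, rfl⟩)
  map_rel_iff' := by
    rintro ⟨u, hu⟩ ⟨v, hv⟩
    simp only [Equiv.ofBijective, SimpleGraph.comap_adj, Function.Embedding.coe_subtype,
      Function.Embedding.coeFn_mk]
    exact adj_mk G

lemma sInf_image_add {A : Set ℕ} (hA : A.Nonempty) (c : ℕ) :
    sInf ((· + c) '' A) = sInf A + c :=
  le_antisymm (Nat.sInf_le ⟨sInf A, Nat.sInf_mem hA, rfl⟩)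
    (le_csInf (hA.image _) (by rintro _ ⟨a, ha, rfl⟩; exact Nat.add_le_add_right (Nat.sInf_le ha) c))

lemma card_le_card_sigma [∀ i, Fintype (W i)] (i : Fin k) :
    Fintype.card (W i) ≤ Fintype.card (Σ i, W i) := by
  rw [Fintype.card_sigma]
  exact Finset.single_le_sum (f := fun i => Fintype.card (W i)) (fun _ _ => Nat.zero_le _)
    (Finset.mem_univ i)

lemma filter_map_adj [∀ i, Fintype (W i)] (G : ∀ i, SimpleGraph (W i)) (i : Fin k)
    (S : Finset (W i)) (u : W i) :
    ((S.map (emb i)).filter (fun b => (disjointUnion G).Adj ⟨i,u⟩ b))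
      = (S.filter (fun v => (G i).Adj u v)).map (emb i) := by
  rw [Finset.filter_map]
  congr 1
  ext v
  rw [Finset.mem_filter, Finset.mem_filter]
  simp [emb, adj_mk]

lemma filter_compl_adj [∀ i, Fintype (W i)] (G : ∀ i, SimpleGraph (W i)) (i : Fin k)
    (S : Finset (W i)) (u : W i) :
    ((S.map (emb i))ᶜ.filter (fun b => (disjointUnion G).Adj ⟨i,u⟩ b))
      = (Sᶜ.filter (fun v => (G i).Adj u v)).map (emb i) := by
  ext a
  simp only [Finset.mem_filter, Finset.mem_compl, Finset.mem_map, emb,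
    Function.Embedding.coeFn_mk]
  constructor
  · rintro ⟨hnot, hadj⟩
    obtain ⟨j, v⟩ := a
    obtain rfl : i = j := adj_fst G hadj
    refine ⟨v, ⟨fun hv => hnot ⟨v, hv, rfl⟩, (adj_mk G).mp hadj⟩, rfl⟩
  · rintro ⟨v, ⟨hv, hadj⟩, rfl⟩
    refine ⟨?_, (adj_mk G).mpr hadj⟩
    rintro ⟨w, hw, hwv⟩
    obtain ⟨-, h2⟩ := Sigma.mk.inj_iff.mp hwv
    exact hv (eq_of_heq h2 ▸ hw)

lemma fy_map [∀ i, Fintype (W i)] (G : ∀ i, SimpleGraph (W i)) (i : Fin k)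
    (S : Finset (W i)) (hS : S.Nonempty) :
    fy (disjointUnion G) (S.map (emb i))
      = fy (G i) S + (Fintype.card (Σ i, W i) - Fintype.card (W i)) := by
  unfold fy
  have hcoe : ((S.map (emb i) : Finset (Σ i, W i)) : Set (Σ i, W i))
      = Sigma.mk i '' (S : Set (W i)) := by
    ext a; simp [emb]
  rw [hcoe, Set.image_image]
  have hfun : ∀ v ∈ (S : Set (W i)),
      (((S.map (emb i)).filter (fun b => (disjointUnion G).Adj ⟨i,v⟩ b)).card
        + Fintype.card (Σ i, W i)
        - ((S.map (emb i))ᶜ.filter (fun b => (disjointUnion G).Adj ⟨i,v⟩ b)).card)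
      = ((S.filter (fun w => (G i).Adj v w)).card + Fintype.card (W i)
        - (Sᶜ.filter (fun w => (G i).Adj v w)).card)
        + (Fintype.card (Σ i, W i) - Fintype.card (W i)) := by
    intro v _
    rw [filter_map_adj, filter_compl_adj, Finset.card_map, Finset.card_map]
    have h1 : (Sᶜ.filter (fun w => (G i).Adj v w)).card ≤ Fintype.card (W i) :=
      le_trans (Finset.card_filter_le _ _) (Finset.card_le_univ _)
    have h2 := card_le_card_sigma (W := W) i
    omega
  refine Eq.trans (congrArg sInf ?_)
    (sInf_image_add ((Finset.coe_nonempty.mpr hS).image _) _)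
  rw [Set.image_image]
  exact Set.image_congr fun a ha => by
    (convert hfun a ha using 4); ext b; simp


lemma da_eq {V : Type*} [Fintype V] (G : SimpleGraph V) :
    da G = ∑ S ∈ (Finset.univ : Finset V).powerset,
      (@ite _ (S.Nonempty ∧ (G.induce (S : Set V)).Connected) (Classical.propDecidable _)
        (Polynomial.monomial S.card (Polynomial.monomial (fy G S) (1 : ℤ))) 0) := by
  rw [da]
  refine Finset.sum_congr rfl fun S _ => ?_
  by_cases h : S.Nonempty ∧ (G.induce (S : Set V)).Connected
  · rw [if_pos h, if_pos h]
  · rw [if_neg h, if_neg h]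

end Aux

/-- `da` of a disjoint union: `da(∪ᵢ Gᵢ; x, y) = Σᵢ da(Gᵢ; x, y) · y^{n - |Gᵢ|}`,
where `n = Σᵢ |Gᵢ|`. -/
theorem stmt7 {k : ℕ} {W : Fin k → Type*} [∀ i, Fintype (W i)]
    (G : ∀ i, SimpleGraph (W i)) :
    da (disjointUnion G)
      = ∑ i : Fin k, da (G i)
          * Polynomial.C (Polynomial.X ^ (Fintype.card (Σ i, W i) - Fintype.card (W i))) := by
  classical
  have hL : da (disjointUnion G)
      = ∑ S ∈ ((Finset.univ : Finset (Σ i, W i)).powerset).filter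
          (fun S => ∃ (i : Fin k) (T : Finset (W i)), T.Nonempty ∧ S = T.map (emb i)),
          (@ite _ (S.Nonempty ∧ ((disjointUnion G).induce (S : Set (Σ i, W i))).Connected)
            (Classical.propDecidable _)
            (Polynomial.monomial S.card
              (Polynomial.monomial (fy (disjointUnion G) S) (1 : ℤ))) 0) := by
    rw [da_eq]
    refine (Finset.sum_filter_of_ne ?_).symm
    intro S _ hne
    have hcond : S.Nonempty ∧ ((disjointUnion G).induce (S : Set (Σ i, W i))).Connected := by
      by_contra h
      exact hne (if_neg h)
    obtain ⟨⟨a, ha⟩, hconn⟩ := hcond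
    obtain ⟨i, u⟩ := a
    refine ⟨i, S.preimage (Sigma.mk i) (sigma_mk_injective.injOn), ⟨u, by simpa using ha⟩, ?_⟩
    ext b
    simp only [Finset.mem_map, Finset.mem_preimage, emb, Function.Embedding.coeFn_mk]
    constructor
    · intro hb
      have hfst : b.1 = i := by
        have := fst_eq_of_reachable G
          (hconn.preconnected ⟨b, by simpa using hb⟩ ⟨⟨i, u⟩, by simpa using ha⟩)
        simpa using this
      obtain ⟨j, v⟩ := b
      obtain rfl : i = j := hfst.symm
      exact ⟨v, hb, rfl⟩
    · rintro ⟨v, hv, rfl⟩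
      exact hv
  rw [hL]
  have hR : ∀ i : Fin k,
      da (G i) * Polynomial.C (Polynomial.X
          ^ (Fintype.card (Σ i, W i) - Fintype.card (W i)))
        = ∑ T ∈ ((Finset.univ : Finset (W i)).powerset).filter Finset.Nonempty,
            (@ite _ (T.Nonempty ∧ ((G i).induce (T : Set (W i))).Connected)
              (Classical.propDecidable _)
              (Polynomial.monomial T.card (Polynomial.monomial (fy (G i) T) (1 : ℤ))) 0)
            * Polynomial.C (Polynomial.X
                ^ (Fintype.card (Σ i, W i) - Fintype.card (W i))) := by
    intro i
    rw [da_eq, Finset.sum_mul]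
    refine (Finset.sum_filter_of_ne ?_).symm
    intro T _ hne
    by_contra hT
    apply hne
    rw [if_neg (fun hc => hT hc.1), zero_mul]
  rw [Finset.sum_congr rfl (fun i _ => hR i)]
  rw [Finset.sum_sigma']
  refine (Finset.sum_bij (fun p _ => p.2.map (emb p.1)) ?_ ?_ ?_ ?_).symm
  · rintro ⟨i, T⟩ hp
    simp only [Finset.mem_sigma, Finset.mem_filter, Finset.mem_powerset] at hp
    simp only [Finset.mem_filter, Finset.mem_powerset]
    exact ⟨Finset.subset_univ _, ⟨i, T, hp.2.2, rfl⟩⟩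
  · rintro ⟨i₁, T₁⟩ hp₁ ⟨i₂, T₂⟩ hp₂ h
    simp only [Finset.mem_sigma, Finset.mem_filter, Finset.mem_powerset] at hp₁ hp₂
    dsimp only at h
    obtain ⟨t, ht⟩ := hp₁.2.2
    have hmem : (⟨i₁, t⟩ : Σ i, W i) ∈ T₂.map (emb i₂) := by
      rw [← h]; exact Finset.mem_map_of_mem _ ht
    obtain ⟨v, hv, hveq⟩ := Finset.mem_map.mp hmem
    obtain ⟨rfl, -⟩ := Sigma.mk.inj_iff.mp hveq
    have : T₂ = T₁ := Finset.map_injective (emb _) h.symm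
    subst this
    rfl
  · intro S hS
    simp only [Finset.mem_filter, Finset.mem_powerset] at hS
    obtain ⟨-, i, T, hT, rfl⟩ := hS
    exact ⟨⟨i, T⟩, by simp [hT], rfl⟩
  · rintro ⟨i, T⟩ hp
    simp only [Finset.mem_sigma, Finset.mem_filter, Finset.mem_powerset] at hp
    beta_reduce
    have hTne : T.Nonempty := hp.2.2
    have hmapne : (T.map (emb i)).Nonempty := Finset.map_nonempty.mpr hTne
    have hconn_iff : ((G i).induce (T : Set (W i))).Connected ↔
        ((disjointUnion G).induce
          ((T.map (emb i) : Finset (Σ i, W i)) : Set (Σ i, W i))).Connected :=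
      (fiberIso G i T).connected_iff
    by_cases hc : ((G i).induce (T : Set (W i))).Connected
    · rw [if_pos ⟨hTne, hc⟩, if_pos ⟨hmapne, hconn_iff.mp hc⟩, Finset.card_map,
        fy_map G i T hTne, ← Polynomial.monomial_zero_left,
        Polynomial.monomial_mul_monomial, Polynomial.X_pow_eq_monomial,
        Polynomial.monomial_mul_monomial]
      simp
    · rw [if_neg (fun h => hc h.2), if_neg (fun h => hc (hconn_iff.mpr h.2)), zero_mul]
end

section
/- For the path graph P_n on n ≥ 2 vertices, da(P_n; x, y) = 2x y^{n−1} + (n−2)x y^{n−2} + y^n Σ_{i=2}^{n−1} (n−i+1) x^i + x^n y^{n+1}. -/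
open Polynomial Finset

open scoped Classical

variable {V : Type*}

lemma ivt {n : ℕ} {u v : Fin n} (w : (SimpleGraph.pathGraph n).Walk u v) (c : Fin n)
    (h : (u.val ≤ c.val ∧ c.val ≤ v.val) ∨ (v.val ≤ c.val ∧ c.val ≤ u.val)) :
    c ∈ w.support := by
  induction w with
  | nil =>
    simp only [SimpleGraph.Walk.support_nil, List.mem_singleton]
    exact Fin.ext (by omega)
  | @cons u u' v huv w ih =>
    by_cases hc : c = u
    · simp [hc]
    · have hcu : c.val ≠ u.val := fun h' => hc (Fin.ext h')
      have hadj := SimpleGraph.pathGraph_adj.mp huv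
      rw [SimpleGraph.Walk.support_cons]
      refine List.mem_cons_of_mem _ (ih ?_)
      omega

lemma connected_char {n : ℕ} (S : Finset (Fin n)) :
    (S.Nonempty ∧ ((SimpleGraph.pathGraph n).induce (S : Set (Fin n))).Connected) ↔
      ∃ a b : Fin n, a ≤ b ∧ S = Finset.Icc a b := by
  constructor
  · rintro ⟨hS, hconn⟩
    refine ⟨S.min' hS, S.max' hS, S.min'_le _ (S.max'_mem hS), ?_⟩
    apply Finset.Subset.antisymm
    · intro x hx
      simp only [Finset.mem_Icc]
      exact ⟨S.min'_le _ hx, S.le_max' _ hx⟩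
    · intro c hc
      rw [Finset.mem_Icc] at hc
      have hmin : (S.min' hS : Fin n) ∈ S := S.min'_mem hS
      have hmax : (S.max' hS : Fin n) ∈ S := S.max'_mem hS
      obtain ⟨w⟩ := hconn.preconnected ⟨S.min' hS, by simpa using hmin⟩ ⟨S.max' hS, by simpa using hmax⟩
      have hmem : c ∈ (w.map ⟨Subtype.val, fun h => h⟩).support :=
        ivt _ c (Or.inl ⟨hc.1, hc.2⟩)
      rw [SimpleGraph.Walk.support_map, List.mem_map] at hmem
      obtain ⟨d, _, hd⟩ := hmem
      have hds : (d : Fin n) ∈ (S : Set (Fin n)) := d.2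
      have hd' : (d : Fin n) = c := hd
      rw [hd'] at hds
      exact Finset.mem_coe.mp hds
  · rintro ⟨a, b, hab, rfl⟩
    refine ⟨⟨a, by simp [hab]⟩, ?_⟩
    rw [SimpleGraph.connected_iff]
    constructor
    · -- preconnected
      have key : ∀ k : ℕ, ∀ x y : ((Finset.Icc a b : Finset (Fin n)) : Set (Fin n)),
          (x : Fin n).val ≤ (y : Fin n).val → (y : Fin n).val - (x : Fin n).val = k →
          ((SimpleGraph.pathGraph n).induce _).Reachable x y := by
        intro k
        induction k with
        | zero =>
          intro x y hxy hk
          have : x = y := Subtype.ext (Fin.ext (by omega))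
          rw [this]
        | succ k ih =>
          intro x y hxy hk
          have hxb : (x : Fin n) ∈ Finset.Icc a b := x.2
          have hyb : (y : Fin n) ∈ Finset.Icc a b := y.2
          rw [Finset.mem_Icc] at hxb hyb
          have hxval : (x : Fin n).val + 1 < n := by
            have := (y : Fin n).isLt
            omega
          set x' : Fin n := ⟨(x : Fin n).val + 1, hxval⟩ with hx'
          have hx'mem : x' ∈ Finset.Icc a b := by
            rw [Finset.mem_Icc, Fin.le_def, Fin.le_def]
            have h1 := Fin.le_def.mp hxb.1
            have h2 := Fin.le_def.mp hyb.2
            constructor <;> simp [hx'] <;> omega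
          have hadj : ((SimpleGraph.pathGraph n).induce
              ((Finset.Icc a b : Finset (Fin n)) : Set (Fin n))).Adj x ⟨x', by simpa using hx'mem⟩ := by
            show (SimpleGraph.pathGraph n).Adj (x : Fin n) x'
            rw [SimpleGraph.pathGraph_adj]
            left; rfl
          exact hadj.reachable.trans (ih ⟨x', by simpa using hx'mem⟩ y (by show (x : Fin n).val + 1 ≤ (y : Fin n).val; omega)
            (by simp [hx']; omega))
      intro x y
      rcases le_total (x : Fin n).val (y : Fin n).val with h | h
      · exact key _ x y h rfl
      · exact (key _ y x h rfl).symm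
    · exact ⟨⟨a, by simp [hab]⟩⟩
lemma card_filter_subsingleton {α : Type*} (S : Finset α) (p : α → Prop) [DecidablePred p]
    (hp : ∀ v, p v → ∀ w, p w → v = w) :
    (S.filter p).card = if ∃ v ∈ S, p v then 1 else 0 := by
  split_ifs with h
  · obtain ⟨v, hv, hpv⟩ := h
    rw [Finset.card_eq_one]
    refine ⟨v, ?_⟩
    ext w
    simp only [Finset.mem_filter, Finset.mem_singleton]
    constructor
    · rintro ⟨_, hw⟩; exact hp w hw v hpv
    · rintro rfl; exact ⟨hv, hpv⟩
  · rw [Finset.card_eq_zero, Finset.filter_eq_empty_iff]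
    push_neg at h
    intro x hx
    exact h x hx

lemma filter_adj_card {n : ℕ} (u : Fin n) (S : Finset (Fin n))
    [DecidablePred (fun v => (SimpleGraph.pathGraph n).Adj u v)] :
    (S.filter (fun v => (SimpleGraph.pathGraph n).Adj u v)).card
      = (if ∃ v ∈ S, v.val = u.val + 1 then 1 else 0)
        + (if ∃ v ∈ S, v.val + 1 = u.val then 1 else 0) := by
  have h1 : S.filter (fun v => (SimpleGraph.pathGraph n).Adj u v)
      = S.filter (fun v => v.val = u.val + 1) ∪ S.filter (fun v => v.val + 1 = u.val) := by
    rw [← Finset.filter_or]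
    apply Finset.filter_congr
    intro v _
    rw [SimpleGraph.pathGraph_adj]
    constructor <;> (rintro (h | h) <;> simp_all <;> omega)
  rw [h1, Finset.card_union_of_disjoint, card_filter_subsingleton _ _ (fun v hv w hw => Fin.ext (by omega)),
    card_filter_subsingleton _ _ (fun v hv w hw => Fin.ext (by omega))]
  · congr
  · rw [Finset.disjoint_left]
    intro v hv hv'
    simp only [Finset.mem_filter] at hv hv'
    omega

lemma compl_filter_card {n : ℕ} [DecidableEq (Fin n)] (S : Finset (Fin n)) (q : Fin n → Prop) [DecidablePred q] :
    (Sᶜ.filter q).card = (Finset.univ.filter q).card - (S.filter q).card := by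
  have h : S.filter q ∪ Sᶜ.filter q = Finset.univ.filter q := by
    rw [← Finset.filter_union, Finset.union_compl]
  have hd : Disjoint (S.filter q) (Sᶜ.filter q) :=
    (Finset.disjoint_filter_filter (disjoint_compl_right)).symm.symm
  rw [← h, Finset.card_union_of_disjoint hd]
  omega

lemma g_val {n : ℕ} [DecidableEq (Fin n)] (hn : 2 ≤ n) (a b : Fin n) (u : Fin n)
    [DecidablePred (fun v => (SimpleGraph.pathGraph n).Adj u v)] (hu : u ∈ Finset.Icc a b) :
    ((Finset.Icc a b).filter (fun v => (SimpleGraph.pathGraph n).Adj u v)).card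
        + Fintype.card (Fin n)
      - ((Finset.Icc a b)ᶜ.filter (fun v => (SimpleGraph.pathGraph n).Adj u v)).card
    = n + 2 * ((if a.val < u.val then 1 else 0) + (if u.val < b.val then 1 else 0))
      - ((if 0 < u.val then 1 else 0) + (if u.val + 1 < n then 1 else 0)) := by
  rw [Finset.mem_Icc] at hu
  have hau : a.val ≤ u.val := hu.1
  have hub : u.val ≤ b.val := hu.2
  have hbn := b.isLt
  have e1 : (∃ v ∈ Finset.Icc a b, v.val = u.val + 1) ↔ u.val < b.val := by
    constructor
    · rintro ⟨v, hv, hveq⟩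
      rw [Finset.mem_Icc] at hv
      have h1 : a.val ≤ v.val := hv.1
      have h2 : v.val ≤ b.val := hv.2
      omega
    · intro h
      refine ⟨⟨u.val + 1, by omega⟩, ?_, rfl⟩
      rw [Finset.mem_Icc]
      exact ⟨Fin.le_def.mpr (by simp; omega), Fin.le_def.mpr (by simp; omega)⟩
  have e2 : (∃ v ∈ Finset.Icc a b, v.val + 1 = u.val) ↔ a.val < u.val := by
    constructor
    · rintro ⟨v, hv, hveq⟩
      rw [Finset.mem_Icc] at hv
      have h1 : a.val ≤ v.val := hv.1
      omega
    · intro h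
      refine ⟨⟨u.val - 1, by omega⟩, ?_, by simp; omega⟩
      rw [Finset.mem_Icc]
      exact ⟨Fin.le_def.mpr (by simp; omega), Fin.le_def.mpr (by simp; omega)⟩
  have e3 : (∃ v ∈ (Finset.univ : Finset (Fin n)), v.val = u.val + 1) ↔ u.val + 1 < n := by
    constructor
    · rintro ⟨v, _, hveq⟩; have := v.isLt; omega
    · intro h; exact ⟨⟨u.val + 1, h⟩, Finset.mem_univ _, rfl⟩
  have e4 : (∃ v ∈ (Finset.univ : Finset (Fin n)), v.val + 1 = u.val) ↔ 0 < u.val := by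
    constructor
    · rintro ⟨v, _, hveq⟩; omega
    · intro h; exact ⟨⟨u.val - 1, by omega⟩, Finset.mem_univ _, by simp; omega⟩
  rw [compl_filter_card, filter_adj_card, filter_adj_card]
  simp only [e1, e2, e3, e4, Fintype.card_fin]
  split_ifs <;> omega

lemma fy_eq_of {V : Type*} [Fintype V] (G : SimpleGraph V) (S : Finset V) (u : V) (hu : u ∈ S)
    (m : ℕ)
    (h1 : (S.filter (fun v => G.Adj u v)).card + Fintype.card V
      - (Sᶜ.filter (fun v => G.Adj u v)).card = m)
    (h2 : ∀ v ∈ S, m ≤ (S.filter (fun w => G.Adj v w)).card + Fintype.card V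
      - (Sᶜ.filter (fun w => G.Adj v w)).card) :
    fy G S = m := by
  apply le_antisymm
  · exact Nat.sInf_le ⟨u, hu, h1⟩
  · refine le_csInf ⟨_, ⟨u, hu, rfl⟩⟩ ?_
    rintro _ ⟨v, hv, rfl⟩
    exact h2 v hv

lemma fy_Icc {n : ℕ} (hn : 2 ≤ n) (a b : Fin n) (hab : a ≤ b) :
    fy (SimpleGraph.pathGraph n) (Finset.Icc a b) =
      if a = b then (if a.val = 0 ∨ a.val + 1 = n then n - 1 else n - 2)
      else (if a.val = 0 ∧ b.val + 1 = n then n + 1 else n) := by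
  have hab' : a.val ≤ b.val := hab
  have hbn := b.isLt
  have han := a.isLt
  split_ifs with h1 h2 h3
  · -- a = b, endpoint
    subst h1
    apply fy_eq_of _ _ a (by simp)
    · rw [@g_val n (fun _ _ => Classical.propDecidable _) hn a a a (fun _ => Classical.propDecidable _) (by simp)]
      split_ifs <;> omega
    · intro v hv
      have : v = a := by
        rw [Finset.mem_Icc] at hv
        exact le_antisymm hv.2 hv.1
      subst this
      rw [@g_val n (fun _ _ => Classical.propDecidable _) hn v v v (fun _ => Classical.propDecidable _) (by simp)]
      split_ifs <;> omega
  · -- a = b, interior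
    subst h1
    apply fy_eq_of _ _ a (by simp)
    · rw [@g_val n (fun _ _ => Classical.propDecidable _) hn a a a (fun _ => Classical.propDecidable _) (by simp)]
      push_neg at h2
      split_ifs <;> omega
    · intro v hv
      have hva : v = a := by
        rw [Finset.mem_Icc] at hv
        exact le_antisymm hv.2 hv.1
      subst hva
      rw [@g_val n (fun _ _ => Classical.propDecidable _) hn v v v (fun _ => Classical.propDecidable _) (by simp)]
      split_ifs <;> omega
  · -- full path
    have hne : a.val < b.val := by
      rcases Nat.lt_or_ge a.val b.val with h | h
      · exact h
      · exact absurd (Fin.ext (by omega)) h1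
    apply fy_eq_of _ _ a (by simp [Finset.mem_Icc, hab])
    · rw [@g_val n (fun _ _ => Classical.propDecidable _) hn a b a (fun _ => Classical.propDecidable _) (by simp [Finset.mem_Icc, hab])]
      split_ifs <;> omega
    · intro v hv
      rw [@g_val n (fun _ _ => Classical.propDecidable _) hn a b v (fun _ => Classical.propDecidable _) hv]
      rw [Finset.mem_Icc] at hv
      have h1 : a.val ≤ v.val := hv.1
      have h2' : v.val ≤ b.val := hv.2
      split_ifs <;> omega
  · -- a < b, not full
    have hne : a.val < b.val := by
      rcases Nat.lt_or_ge a.val b.val with h | h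
      · exact h
      · exact absurd (Fin.ext (by omega)) h1
    rcases Nat.eq_zero_or_pos a.val with ha0 | ha0
    · -- a = 0, so b.val + 1 ≠ n
      have hb : b.val + 1 ≠ n := fun h => h3 ⟨ha0, h⟩
      apply fy_eq_of _ _ b (by simp [Finset.mem_Icc, hab])
      · rw [@g_val n (fun _ _ => Classical.propDecidable _) hn a b b (fun _ => Classical.propDecidable _) (by simp [Finset.mem_Icc, hab])]
        split_ifs <;> omega
      · intro v hv
        rw [@g_val n (fun _ _ => Classical.propDecidable _) hn a b v (fun _ => Classical.propDecidable _) hv]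
        rw [Finset.mem_Icc] at hv
        have hv1 : a.val ≤ v.val := hv.1
        have hv2 : v.val ≤ b.val := hv.2
        split_ifs <;> omega
    · apply fy_eq_of _ _ a (by simp [Finset.mem_Icc, hab])
      · rw [@g_val n (fun _ _ => Classical.propDecidable _) hn a b a (fun _ => Classical.propDecidable _) (by simp [Finset.mem_Icc, hab])]
        split_ifs <;> omega
      · intro v hv
        rw [@g_val n (fun _ _ => Classical.propDecidable _) hn a b v (fun _ => Classical.propDecidable _) hv]
        rw [Finset.mem_Icc] at hv
        have hv1 : a.val ≤ v.val := hv.1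
        have hv2 : v.val ≤ b.val := hv.2
        split_ifs <;> omega

lemma monomial_key (k m : ℕ) :
    (Polynomial.monomial k (Polynomial.monomial m (1 : ℤ)) : Polynomial (Polynomial ℤ))
      = Polynomial.C (Polynomial.X ^ m) * Polynomial.X ^ k := by
  rw [Polynomial.X_pow_eq_monomial m, Polynomial.C_mul_X_pow_eq_monomial]

set_option maxHeartbeats 1000000 in
/-- `da` of the path graph `Pₙ`, `n ≥ 2`. -/
theorem stmt8 (n : ℕ) (hn : 2 ≤ n) :
    da (SimpleGraph.pathGraph n)
      = 2 * X * Polynomial.C (Polynomial.X ^ (n - 1))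
        + ((n - 2 : ℕ) : Polynomial (Polynomial ℤ)) * X * Polynomial.C (Polynomial.X ^ (n - 2))
        + Polynomial.C (Polynomial.X ^ n)
            * ∑ i ∈ Finset.Icc 2 (n - 1), ((n - i + 1 : ℕ) : Polynomial (Polynomial ℤ)) * X ^ i
        + X ^ n * Polynomial.C (Polynomial.X ^ (n + 1)) := by
  have h0 : 0 < n := by omega
  have hn1 : n - 1 < n := by omega
  have e0 : ((⟨0, h0⟩ : Fin n) : ℕ) = 0 := rfl
  have e1 : ((⟨n - 1, hn1⟩ : Fin n) : ℕ) = n - 1 := rfl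
  set M : Finset (Fin n) → Polynomial (Polynomial ℤ) :=
    fun S => Polynomial.monomial S.card
      (Polynomial.monomial (fy (SimpleGraph.pathGraph n) S) (1 : ℤ)) with hM
  set T : Finset (Fin n × Fin n) := Finset.univ.filter (fun p => p.1 ≤ p.2) with hT
  have step1 : da (SimpleGraph.pathGraph n) = ∑ p ∈ T, M (Finset.Icc p.1 p.2) := by
    unfold da
    set I : Finset (Finset (Fin n)) := T.image (fun p => Finset.Icc p.1 p.2) with hI
    have hmemI : ∀ S : Finset (Fin n), S ∈ I ↔ ∃ a b : Fin n, a ≤ b ∧ S = Finset.Icc a b := by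
      intro S
      simp only [hI, Finset.mem_image, hT, Finset.mem_filter, Finset.mem_univ, true_and]
      constructor
      · rintro ⟨⟨a, b⟩, hab, rfl⟩
        exact ⟨a, b, hab, rfl⟩
      · rintro ⟨a, b, hab, rfl⟩
        exact ⟨(a, b), hab, rfl⟩
    have hsub : I ⊆ (Finset.univ : Finset (Fin n)).powerset :=
      fun S _ => Finset.mem_powerset.mpr (Finset.subset_univ S)
    refine ((Finset.sum_subset hsub ?_).symm).trans ?_
    · intro S hS hSI
      exact if_neg (fun h => hSI ((hmemI S).mpr ((connected_char S).mp h)))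
    rw [hI, Finset.sum_image]
    swap
    · rintro ⟨a, b⟩ hp ⟨c, d⟩ hq h
      simp only [hT, Finset.mem_coe, Finset.mem_filter, Finset.mem_univ, true_and] at hp hq
      dsimp only at h
      have h1 : a ∈ Finset.Icc c d := h ▸ Finset.mem_Icc.mpr ⟨le_refl a, hp⟩
      have h2 : c ∈ Finset.Icc a b := h.symm ▸ Finset.mem_Icc.mpr ⟨le_refl c, hq⟩
      have h3 : b ∈ Finset.Icc c d := h ▸ Finset.mem_Icc.mpr ⟨hp, le_refl b⟩
      have h4 : d ∈ Finset.Icc a b := h.symm ▸ Finset.mem_Icc.mpr ⟨hq, le_refl d⟩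
      rw [Finset.mem_Icc] at h1 h2 h3 h4
      exact Prod.ext (le_antisymm h2.1 h1.1) (le_antisymm h3.2 h4.2)
    apply Finset.sum_congr rfl
    intro p hp
    apply if_pos
    rw [connected_char]
    simp only [hT, Finset.mem_filter, Finset.mem_univ, true_and] at hp
    exact ⟨p.1, p.2, hp, rfl⟩
  rw [step1]
  rw [← Finset.sum_filter_add_sum_filter_not T (fun p => p.1 = p.2)]
  rw [← Finset.sum_filter_add_sum_filter_not (T.filter (fun p => p.1 = p.2))
    (fun p => p.1.val = 0 ∨ p.1.val + 1 = n)]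
  rw [← Finset.sum_filter_add_sum_filter_not (T.filter (fun p => ¬ p.1 = p.2))
    (fun p => p.1.val = 0 ∧ p.2.val + 1 = n)]
  -- Part 11 : the two path-end singletons
  have h11 : ∑ p ∈ (T.filter (fun p => p.1 = p.2)).filter
      (fun p => p.1.val = 0 ∨ p.1.val + 1 = n), M (Finset.Icc p.1 p.2)
      = 2 * X * Polynomial.C (Polynomial.X ^ (n - 1)) := by
    have hconst : ∀ p ∈ (T.filter (fun p => p.1 = p.2)).filter
        (fun p => p.1.val = 0 ∨ p.1.val + 1 = n),
        M (Finset.Icc p.1 p.2)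
          = Polynomial.monomial 1 (Polynomial.monomial (n - 1) (1 : ℤ)) := by
      rintro ⟨a, b⟩ hp
      simp only [hT, Finset.mem_filter, Finset.mem_univ, true_and] at hp
      obtain ⟨⟨hab, heq⟩, hcond⟩ := hp
      simp only [hM, Fin.card_Icc, fy_Icc hn a b hab, if_pos heq, if_pos hcond]
      have hexp : b.val + 1 - a.val = 1 := by
        have : a.val = b.val := by rw [heq]
        omega
      rw [hexp]
    rw [Finset.sum_congr rfl hconst, Finset.sum_const]
    have hset : (T.filter (fun p => p.1 = p.2)).filter
        (fun p => p.1.val = 0 ∨ p.1.val + 1 = n)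
        = {((⟨0, h0⟩ : Fin n), (⟨0, h0⟩ : Fin n)), ((⟨n-1, hn1⟩ : Fin n), (⟨n-1, hn1⟩ : Fin n))} := by
      ext ⟨x, y⟩
      simp only [Finset.mem_filter, hT, Finset.mem_univ, true_and, Finset.mem_insert,
        Finset.mem_singleton, Prod.ext_iff, Fin.ext_iff, Fin.le_def, e0, e1]
      omega
    rw [hset, Finset.card_insert_of_notMem
      (by simp only [Finset.mem_singleton, Prod.ext_iff, Fin.ext_iff, e0, e1]; omega),
      Finset.card_singleton]
    rw [monomial_key]
    push_cast
    ring
  -- Part 12 : the interior singletons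
  have h12 : ∑ p ∈ (T.filter (fun p => p.1 = p.2)).filter
      (fun p => ¬(p.1.val = 0 ∨ p.1.val + 1 = n)), M (Finset.Icc p.1 p.2)
      = ((n - 2 : ℕ) : Polynomial (Polynomial ℤ)) * X * Polynomial.C (Polynomial.X ^ (n - 2)) := by
    have hconst : ∀ p ∈ (T.filter (fun p => p.1 = p.2)).filter
        (fun p => ¬(p.1.val = 0 ∨ p.1.val + 1 = n)),
        M (Finset.Icc p.1 p.2)
          = Polynomial.monomial 1 (Polynomial.monomial (n - 2) (1 : ℤ)) := by
      rintro ⟨a, b⟩ hp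
      simp only [hT, Finset.mem_filter, Finset.mem_univ, true_and] at hp
      obtain ⟨⟨hab, heq⟩, hcond⟩ := hp
      simp only [hM, Fin.card_Icc, fy_Icc hn a b hab, if_pos heq, if_neg hcond]
      have hexp : b.val + 1 - a.val = 1 := by
        have : a.val = b.val := by rw [heq]
        omega
      rw [hexp]
    rw [Finset.sum_congr rfl hconst, Finset.sum_const]
    have hcard : ((T.filter (fun p => p.1 = p.2)).filter
        (fun p => ¬(p.1.val = 0 ∨ p.1.val + 1 = n))).card = n - 2 := by
      have hset : (T.filter (fun p => p.1 = p.2)).filter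
          (fun p => ¬(p.1.val = 0 ∨ p.1.val + 1 = n))
          = (Finset.univ.filter (fun a : Fin n => ¬(a.val = 0 ∨ a.val + 1 = n))).image
              (fun a => (a, a)) := by
        ext ⟨x, y⟩
        simp only [Finset.mem_filter, hT, Finset.mem_univ, true_and, Finset.mem_image,
          Prod.ext_iff]
        constructor
        · rintro ⟨⟨hle, heq⟩, hcond⟩
          exact ⟨x, hcond, rfl, heq⟩
        · rintro ⟨a, ha, rfl, rfl⟩
          exact ⟨⟨le_refl _, rfl⟩, ha⟩
      rw [hset, Finset.card_image_of_injective _ (fun a b h => (Prod.ext_iff.mp h).1)]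
      have : Finset.univ.filter (fun a : Fin n => ¬(a.val = 0 ∨ a.val + 1 = n))
          = Finset.univ \ {(⟨0, h0⟩ : Fin n), (⟨n-1, hn1⟩ : Fin n)} := by
        ext x
        simp only [Finset.mem_filter, Finset.mem_univ, true_and, Finset.mem_sdiff,
          Finset.mem_insert, Finset.mem_singleton, Fin.ext_iff, e0, e1]
        omega
      rw [this, Finset.card_sdiff_of_subset (by simp), Finset.card_univ, Fintype.card_fin,
        Finset.card_insert_of_notMem
          (by simp only [Finset.mem_singleton, Fin.ext_iff, e0, e1]; omega),
        Finset.card_singleton]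
    rw [hcard, monomial_key]
    push_cast
    ring
  -- Part 22 : the full path
  have h22 : ∑ p ∈ (T.filter (fun p => ¬ p.1 = p.2)).filter
      (fun p => p.1.val = 0 ∧ p.2.val + 1 = n), M (Finset.Icc p.1 p.2)
      = X ^ n * Polynomial.C (Polynomial.X ^ (n + 1)) := by
    have hset : (T.filter (fun p => ¬ p.1 = p.2)).filter
        (fun p => p.1.val = 0 ∧ p.2.val + 1 = n)
        = {((⟨0, h0⟩ : Fin n), (⟨n-1, hn1⟩ : Fin n))} := by
      ext ⟨x, y⟩
      simp only [Finset.mem_filter, hT, Finset.mem_univ, true_and, Finset.mem_singleton,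
        Prod.ext_iff, Fin.ext_iff, Fin.le_def, e0, e1]
      omega
    rw [hset, Finset.sum_singleton]
    have hab : (⟨0, h0⟩ : Fin n) ≤ (⟨n-1, hn1⟩ : Fin n) := by
      rw [Fin.le_def, e0, e1]; omega
    have hfy : fy (SimpleGraph.pathGraph n) (Finset.Icc (⟨0, h0⟩ : Fin n) (⟨n-1, hn1⟩ : Fin n))
        = n + 1 := by
      rw [fy_Icc hn _ _ hab,
        if_neg (by rw [Fin.ext_iff, e0, e1]; omega : ¬ (⟨0, h0⟩ : Fin n) = ⟨n-1, hn1⟩),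
        if_pos (⟨e0, by rw [e1]; omega⟩ :
          ((⟨0, h0⟩ : Fin n) : ℕ) = 0 ∧ ((⟨n-1, hn1⟩ : Fin n) : ℕ) + 1 = n)]
    simp only [hM, Fin.card_Icc, hfy]
    have hexp : ((⟨n-1, hn1⟩ : Fin n) : ℕ) + 1 - ((⟨0, h0⟩ : Fin n) : ℕ) = n := by
      rw [e0, e1]; omega
    rw [hexp, monomial_key]
    ring
  -- Part 21 : proper intervals of size 2 .. n-1
  have h21 : ∑ p ∈ (T.filter (fun p => ¬ p.1 = p.2)).filter
      (fun p => ¬(p.1.val = 0 ∧ p.2.val + 1 = n)), M (Finset.Icc p.1 p.2)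
      = Polynomial.C (Polynomial.X ^ n)
          * ∑ i ∈ Finset.Icc 2 (n - 1),
              ((n - i + 1 : ℕ) : Polynomial (Polynomial ℤ)) * X ^ i := by
    set S21 := (T.filter (fun p => ¬ p.1 = p.2)).filter
      (fun p => ¬(p.1.val = 0 ∧ p.2.val + 1 = n)) with hS21
    have hmem : ∀ p ∈ S21, p.1 ≤ p.2 ∧ p.1.val < p.2.val ∧ ¬(p.1.val = 0 ∧ p.2.val + 1 = n) := by
      intro p hp
      simp only [hS21, hT, Finset.mem_filter, Finset.mem_univ, true_and] at hp
      obtain ⟨⟨hab, hne⟩, hnf⟩ := hp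
      have hab' : p.1.val ≤ p.2.val := hab
      have : p.1.val ≠ p.2.val := fun h => hne (Fin.ext h)
      exact ⟨hab, by omega, hnf⟩
    have hmaps : ∀ p ∈ S21, p.2.val + 1 - p.1.val ∈ Finset.Icc 2 (n - 1) := by
      intro p hp
      obtain ⟨hab, hlt, hnf⟩ := hmem p hp
      have hb := p.2.isLt
      rw [Finset.mem_Icc]
      rcases Nat.eq_zero_or_pos p.1.val with h1 | h1
      · have h2 : p.2.val + 1 ≠ n := fun hB => hnf ⟨h1, hB⟩
        omega
      · omega
    rw [← Finset.sum_fiberwise_of_maps_to hmaps]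
    rw [Finset.mul_sum]
    apply Finset.sum_congr rfl
    intro i hi
    rw [Finset.mem_Icc] at hi
    have hconst : ∀ p ∈ S21.filter (fun p => p.2.val + 1 - p.1.val = i),
        M (Finset.Icc p.1 p.2)
          = Polynomial.monomial i (Polynomial.monomial n (1 : ℤ)) := by
      intro p hp
      rw [Finset.mem_filter] at hp
      obtain ⟨hp1, hpi⟩ := hp
      obtain ⟨hab, hlt, hnf⟩ := hmem p hp1
      have hne : ¬ p.1 = p.2 := fun h => by rw [h] at hlt; omega
      simp only [hM, Fin.card_Icc, fy_Icc hn p.1 p.2 hab, if_neg hne, if_neg hnf, hpi]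
    rw [Finset.sum_congr rfl hconst, Finset.sum_const]
    have hcard : (S21.filter (fun p => p.2.val + 1 - p.1.val = i)).card = n - i + 1 := by
      rw [show n - i + 1 = (Finset.range (n - i + 1)).card from (Finset.card_range _).symm]
      refine Finset.card_bij' (fun p _ => p.1.val)
        (fun k hk => ((⟨k, by rw [Finset.mem_range] at hk; omega⟩ : Fin n),
          (⟨k + i - 1, by rw [Finset.mem_range] at hk; omega⟩ : Fin n))) ?hi ?hj ?hleft ?hright
      case hi =>
        intro p hp
        rw [Finset.mem_filter] at hp
        obtain ⟨hp1, hpi⟩ := hp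
        obtain ⟨hab, hlt, hnf⟩ := hmem p hp1
        have hb := p.2.isLt
        rw [Finset.mem_range]
        show p.1.val < n - i + 1
        omega
      case hj =>
        intro k hk
        rw [Finset.mem_range] at hk
        simp only [hS21, hT, Finset.mem_filter, Finset.mem_univ, true_and]
        refine ⟨⟨⟨?_, ?_⟩, ?_⟩, ?_⟩
        · show k ≤ k + i - 1
          omega
        · intro h
          have h2 : k = k + i - 1 := congrArg Fin.val h
          omega
        · rintro ⟨hA, hB⟩
          have hA' : k = 0 := hA
          have hB' : k + i - 1 + 1 = n := hB
          omega
        · show k + i - 1 + 1 - k = i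
          omega
      case hleft =>
        intro p hp
        rw [Finset.mem_filter] at hp
        obtain ⟨hp1, hpi⟩ := hp
        obtain ⟨hab, hlt, hnf⟩ := hmem p hp1
        have hb := p.2.isLt
        refine Prod.ext rfl (Fin.ext ?_)
        show p.1.val + i - 1 = p.2.val
        omega
      case hright =>
        intro k hk
        rfl
    rw [hcard, monomial_key]
    push_cast
    ring
  rw [h11, h12, h21, h22]
  ring
end

section
/- For the cycle graph C_n on n ≥ 3 vertices, da(C_n; x, y) = n x y^{n−2} + n y^n Σ_{i=2}^{n−1} x^i + x^n y^{n+2}. -/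
open Polynomial Finset

open scoped Classical

variable {V : Type*}

open scoped Fin.NatCast Fin.CommRing

namespace Stmt9Aux

variable {n : ℕ}

/-- arc starting at `a` of length `k` -/
noncomputable def arc [NeZero n] (a : Fin n) (k : ℕ) : Finset (Fin n) :=
  (Finset.range k).image (fun i : ℕ => a + (i : Fin n))

lemma natCast_val [NeZero n] (i : ℕ) (h : i < n) : ((i : Fin n) : ℕ) = i := by
  simp [Fin.val_natCast, Nat.mod_eq_of_lt h]

lemma mem_arc [NeZero n] {a u : Fin n} {k : ℕ} (hk : k ≤ n) :
    u ∈ arc a k ↔ (u - a).val < k := by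
  constructor
  · rintro hu
    obtain ⟨i, hi, rfl⟩ := Finset.mem_image.mp hu
    rw [Finset.mem_range] at hi
    have h2 : (a + (i : Fin n) - a) = (i : Fin n) := by ring
    rw [h2, natCast_val i (by omega)]
    exact hi
  · intro h
    exact Finset.mem_image.mpr ⟨(u - a).val, Finset.mem_range.mpr h, by simp [Fin.cast_val_eq_self]⟩

lemma card_arc [NeZero n] (a : Fin n) {k : ℕ} (hk : k ≤ n) : (arc a k).card = k := by
  rw [arc, Finset.card_image_of_injOn, Finset.card_range]
  intro i hi j hj hij
  rw [Finset.coe_range, Set.mem_Iio] at hi hj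
  have h3 : ((i : Fin n) : ℕ) = ((j : Fin n) : ℕ) := by
    rw [add_left_cancel hij]
  rwa [natCast_val i (by omega), natCast_val j (by omega)] at h3

lemma arc_start_mem [NeZero n] (a : Fin n) {k : ℕ} (hk1 : 1 ≤ k) (hk : k ≤ n) : a ∈ arc a k := by
  rw [mem_arc hk]; simp; omega

end Stmt9Aux

namespace Stmt9Aux2
open Stmt9Aux

variable {n : ℕ} {V' : Type*}

lemma deg_total (hn : 3 ≤ n) (u : Fin n) :
    (Finset.univ.filter (fun v => (SimpleGraph.cycleGraph n).Adj u v)).card = 2 := by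
  obtain ⟨m, rfl⟩ : ∃ m, n = m + 3 := ⟨n - 3, by omega⟩
  have h1 : Finset.univ.filter (fun v => (SimpleGraph.cycleGraph (m+3)).Adj u v)
      = (SimpleGraph.cycleGraph (m+3)).neighborFinset u := by
    rw [SimpleGraph.neighborFinset_eq_filter]
  rw [h1]
  exact SimpleGraph.cycleGraph_degree_three_le

lemma filter_card_split (hn : 3 ≤ n) (S : Finset (Fin n)) (u : Fin n) :
    (S.filter (fun v => (SimpleGraph.cycleGraph n).Adj u v)).card
      + (Sᶜ.filter (fun v => (SimpleGraph.cycleGraph n).Adj u v)).card = 2 := by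
  rw [← deg_total hn u, ← Finset.card_union_of_disjoint, ← Finset.filter_union,
    Finset.union_compl]
  exact Finset.disjoint_filter_filter (disjoint_compl_right)

/-- the per-vertex value in `fy` -/
lemma value_eq (hn : 3 ≤ n) (S : Finset (Fin n)) (u : Fin n) :
    (S.filter (fun v => (SimpleGraph.cycleGraph n).Adj u v)).card + Fintype.card (Fin n)
      - (Sᶜ.filter (fun v => (SimpleGraph.cycleGraph n).Adj u v)).card
    = n - 2 + 2 * (S.filter (fun v => (SimpleGraph.cycleGraph n).Adj u v)).card := by
  have := filter_card_split hn S u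
  rw [Fintype.card_fin]
  omega

lemma fy_eq [Fintype V'] [DecidableEq V'] (G : SimpleGraph V') [DecidableRel G.Adj]
    (S : Finset V') :
    fy G S = sInf ((fun u => (S.filter (fun v => G.Adj u v)).card + Fintype.card V'
      - (Sᶜ.filter (fun v => G.Adj u v)).card) '' (S : Set V')) := by
  rw [fy]
  congr!

lemma fy_eq_of (hn : 3 ≤ n) (S : Finset (Fin n)) (d : ℕ)
    (h1 : ∃ u ∈ S, (S.filter (fun v => (SimpleGraph.cycleGraph n).Adj u v)).card = d)
    (h2 : ∀ u ∈ S, d ≤ (S.filter (fun v => (SimpleGraph.cycleGraph n).Adj u v)).card) :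
    fy (SimpleGraph.cycleGraph n) S = n - 2 + 2 * d := by
  obtain ⟨u, hu, hud⟩ := h1
  rw [fy_eq]
  apply le_antisymm
  · apply Nat.sInf_le
    exact ⟨u, hu, by dsimp only; rw [value_eq hn S u, hud]⟩
  · apply le_csInf
    · exact ⟨_, ⟨u, hu, rfl⟩⟩
    · rintro b ⟨v, hv, rfl⟩
      dsimp only
      rw [value_eq hn S v]
      have := h2 v hv
      omega

lemma val_one' [NeZero n] (hn : 3 ≤ n) : ((1 : Fin n) : ℕ) = 1 := by
  have := natCast_val (n := n) 1 (by omega)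
  rwa [Nat.cast_one] at this

lemma one_ne_zero' [NeZero n] (hn : 3 ≤ n) : (1 : Fin n) ≠ 0 := by
  intro h
  have := val_one' (n := n) hn
  rw [h] at this
  simp at this

lemma two_ne_zero' [NeZero n] (hn : 3 ≤ n) : (2 : Fin n) ≠ 0 := by
  intro h
  have h3 : (((2:ℕ) : Fin n) : ℕ) = 0 := by
    rw [Nat.cast_ofNat, h]; simp
  rw [natCast_val 2 (by omega)] at h3
  omega

lemma val_add_one' [NeZero n] (hn : 3 ≤ n) {x : Fin n} (h : x.val + 1 < n) :
    ((x + 1 : Fin n) : ℕ) = x.val + 1 := by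
  rw [Fin.add_def, val_one' hn]
  simp [Nat.mod_eq_of_lt h]

lemma val_sub_one' [NeZero n] (hn : 3 ≤ n) {x : Fin n} (h : 1 ≤ x.val) :
    ((x - 1 : Fin n) : ℕ) = x.val - 1 := by
  rw [Fin.sub_def, val_one' hn]
  have hx := x.isLt
  have heq : n - 1 + x.val = n + (x.val - 1) := by omega
  simp only [heq]
  rw [Nat.add_mod_left, Nat.mod_eq_of_lt (by omega)]

lemma adj_iff [NeZero n] (hn : 3 ≤ n) (u v : Fin n) :
    (SimpleGraph.cycleGraph n).Adj u v ↔ v = u - 1 ∨ v = u + 1 := by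
  rw [SimpleGraph.cycleGraph_adj']
  constructor
  · rintro (h | h)
    · left
      have h2 : u - v = 1 := by
        apply Fin.val_injective; rw [h, val_one' hn]
      rw [show v = u - (u - v) by ring, h2]
    · right
      have h2 : v - u = 1 := by
        apply Fin.val_injective; rw [h, val_one' hn]
      rw [show v = u + (v - u) by ring, h2]
  · rintro (rfl | rfl)
    · left; rw [show u - (u - 1) = 1 by ring, val_one' hn]
    · right; rw [show u + 1 - u = 1 by ring, val_one' hn]

lemma sub_one_ne [NeZero n] (hn : 3 ≤ n) (u : Fin n) : u - 1 ≠ u + 1 := by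
  intro h
  apply two_ne_zero' (n := n) hn
  have h2 : u + 1 - (u - 1) = 2 := by ring
  rw [h] at h2
  rw [← h2]; ring

lemma self_ne_sub_one [NeZero n] (hn : 3 ≤ n) (u : Fin n) : u ≠ u - 1 := by
  intro h
  apply one_ne_zero' (n := n) hn
  have := sub_eq_self.mp h.symm
  exact this

lemma self_ne_add_one [NeZero n] (hn : 3 ≤ n) (u : Fin n) : u ≠ u + 1 := by
  intro h
  exact one_ne_zero' (n := n) hn (left_eq_add.mp h)

lemma filter_adj_eq [NeZero n] (hn : 3 ≤ n) (S : Finset (Fin n)) (u : Fin n) :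
    S.filter (fun v => (SimpleGraph.cycleGraph n).Adj u v) = S ∩ {u - 1, u + 1} := by
  ext v
  simp only [Finset.mem_filter, Finset.mem_inter, Finset.mem_insert, Finset.mem_singleton,
    adj_iff hn]

lemma fy_univ (hn : 3 ≤ n) :
    fy (SimpleGraph.cycleGraph n) (Finset.univ : Finset (Fin n)) = n + 2 := by
  haveI : NeZero n := ⟨by omega⟩
  have h : fy (SimpleGraph.cycleGraph n) (Finset.univ : Finset (Fin n)) = n - 2 + 2 * 2 := by
    apply fy_eq_of hn
    · exact ⟨0, Finset.mem_univ _, deg_total hn _⟩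
    · intro u _; rw [deg_total hn u]
  rw [h]; omega

lemma arc_one_eq [NeZero n] (hn : 3 ≤ n) (a : Fin n) : arc a 1 = {a} := by
  ext u
  rw [mem_arc (by omega : (1:ℕ) ≤ n), Nat.lt_one_iff, Finset.mem_singleton]
  constructor
  · intro h
    have h2 : u - a = 0 := Fin.val_injective (by simpa using h)
    exact sub_eq_zero.mp h2
  · rintro rfl; simp

lemma fy_arc_one [NeZero n] (hn : 3 ≤ n) (a : Fin n) :
    fy (SimpleGraph.cycleGraph n) (arc a 1) = n - 2 := by
  rw [arc_one_eq hn]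
  have hd : ∀ u ∈ ({a} : Finset (Fin n)),
      (({a} : Finset (Fin n)).filter (fun v => (SimpleGraph.cycleGraph n).Adj u v)).card = 0 := by
    intro u hu
    rw [Finset.mem_singleton] at hu
    subst hu
    rw [filter_adj_eq hn, Finset.card_eq_zero]
    ext v
    simp only [Finset.mem_inter, Finset.mem_singleton, Finset.mem_insert,
      Finset.notMem_empty, iff_false, not_and]
    rintro rfl
    push_neg
    exact ⟨self_ne_sub_one hn v, self_ne_add_one hn v⟩
  have h : fy (SimpleGraph.cycleGraph n) ({a} : Finset (Fin n)) = n - 2 + 2 * 0 :=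
    fy_eq_of hn _ 0 ⟨a, Finset.mem_singleton_self a, hd a (Finset.mem_singleton_self a)⟩
      (fun u _ => Nat.zero_le _)
  rw [h]; omega

lemma fy_arc (hn : 3 ≤ n) [NeZero n] (a : Fin n) {k : ℕ} (hk2 : 2 ≤ k) (hk : k ≤ n - 1) :
    fy (SimpleGraph.cycleGraph n) (arc a k) = n := by
  have hkn : k ≤ n := by omega
  have hmem : ∀ {u : Fin n}, u ∈ arc a k ↔ (u - a).val < k := fun {u} => mem_arc hkn
  have ha : a ∈ arc a k := arc_start_mem a (by omega) hkn
  have haddone : a + 1 ∈ arc a k := by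
    rw [hmem, show a + 1 - a = 1 by ring, val_one' hn]; omega
  have hsubone : a - 1 ∉ arc a k := by
    rw [hmem, show a - 1 - a = 0 - 1 by ring]
    have h01 : ((0 - 1 : Fin n) : ℕ) = n - 1 := by
      rw [Fin.sub_def, val_one' hn]
      simp only [Fin.val_zero]
      show (n - 1 + 0) % n = n - 1
      rw [Nat.add_zero, Nat.mod_eq_of_lt (by omega)]
    rw [h01]; omega
  have hdeg1 : ((arc a k).filter (fun v => (SimpleGraph.cycleGraph n).Adj a v)).card = 1 := by
    rw [filter_adj_eq hn, Finset.card_eq_one]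
    refine ⟨a + 1, ?_⟩
    ext v
    simp only [Finset.mem_inter, Finset.mem_insert, Finset.mem_singleton]
    constructor
    · rintro ⟨hv, rfl | rfl⟩
      · exact absurd hv hsubone
      · rfl
    · rintro rfl
      exact ⟨haddone, Or.inr rfl⟩
  have hlow : ∀ u ∈ arc a k,
      1 ≤ ((arc a k).filter (fun v => (SimpleGraph.cycleGraph n).Adj u v)).card := by
    intro u hu
    rw [Finset.one_le_card]
    have hi := hmem.mp hu
    set i := (u - a).val with hidef
    have hua : u = a + (i : Fin n) := by rw [hidef, Fin.cast_val_eq_self]; ring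
    by_cases hcase : i + 1 < k
    · refine ⟨u + 1, Finset.mem_filter.mpr ⟨?_, ?_⟩⟩
      · rw [hmem, show u + 1 - a = (u - a) + 1 by ring,
          val_add_one' hn (by rw [← hidef]; omega)]
        omega
      · rw [adj_iff hn]; right; rfl
    · refine ⟨u - 1, Finset.mem_filter.mpr ⟨?_, ?_⟩⟩
      · have hi1 : 1 ≤ i := by omega
        rw [hmem, show u - 1 - a = (u - a) - 1 by ring, val_sub_one' hn (by rw [← hidef]; omega)]
        omega
      · rw [adj_iff hn]; left; rfl
  have h : fy (SimpleGraph.cycleGraph n) (arc a k) = n - 2 + 2 * 1 :=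
    fy_eq_of hn _ 1 ⟨a, ha, hdeg1⟩ hlow
  rw [h]; omega

lemma mem_arc_of_lt [NeZero n] {a : Fin n} {k i : ℕ} (hi : i < k) :
    a + (i : Fin n) ∈ arc a k :=
  Finset.mem_image.mpr ⟨i, Finset.mem_range.mpr hi, rfl⟩

lemma induce_adj {s : Set (Fin n)} (G : SimpleGraph (Fin n)) (u v : s) :
    (G.induce s).Adj u v ↔ G.Adj u v := by
  simp [SimpleGraph.comap_adj]

lemma arc_connected [NeZero n] (hn : 3 ≤ n) (a : Fin n) {k : ℕ} (hk1 : 1 ≤ k) (hk : k ≤ n - 1) :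
    ((SimpleGraph.cycleGraph n).induce ((arc a k : Finset (Fin n)) : Set (Fin n))).Connected := by
  have hkn : k ≤ n := by omega
  have ha : a ∈ ((arc a k : Finset (Fin n)) : Set (Fin n)) :=
    Finset.mem_coe.mpr (arc_start_mem a hk1 hkn)
  have key : ∀ i, i < k → ∀ (h : a + (i : Fin n) ∈ ((arc a k : Finset (Fin n)) : Set (Fin n))),
      ((SimpleGraph.cycleGraph n).induce ((arc a k : Finset (Fin n)) : Set (Fin n))).Reachable
        ⟨a, ha⟩ ⟨a + (i : Fin n), h⟩ := by
    intro i
    induction i with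
    | zero =>
      intro _ h
      have e : (⟨a + ((0:ℕ) : Fin n), h⟩ :
          ((arc a k : Finset (Fin n)) : Set (Fin n))) = ⟨a, ha⟩ := Subtype.ext (by simp)
      rw [e]
    | succ i ih =>
      intro hi1 h
      have hi : i < k := by omega
      refine (ih hi (Finset.mem_coe.mpr (mem_arc_of_lt hi))).trans
        (SimpleGraph.Adj.reachable ?_)
      rw [induce_adj, adj_iff hn]
      right
      push_cast
      ring
  rw [SimpleGraph.connected_iff]
  refine ⟨?_, ⟨⟨a, ha⟩⟩⟩
  rintro ⟨u, hu⟩ ⟨v, hv⟩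
  have hu' : u ∈ arc a k := Finset.mem_coe.mp hu
  have hv' : v ∈ arc a k := Finset.mem_coe.mp hv
  have hmu : a + (((u - a).val : ℕ) : Fin n) ∈ ((arc a k : Finset (Fin n)) : Set (Fin n)) := by
    rw [Fin.cast_val_eq_self, show a + (u - a) = u by ring]; exact hu
  have hmv : a + (((v - a).val : ℕ) : Fin n) ∈ ((arc a k : Finset (Fin n)) : Set (Fin n)) := by
    rw [Fin.cast_val_eq_self, show a + (v - a) = v by ring]; exact hv
  have h1 := key ((u - a).val) ((mem_arc hkn).mp hu') hmu
  have h2 := key ((v - a).val) ((mem_arc hkn).mp hv') hmv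
  have e1 : (⟨a + (((u - a).val : ℕ) : Fin n), hmu⟩ :
      ((arc a k : Finset (Fin n)) : Set (Fin n))) = ⟨u, hu⟩ :=
    Subtype.ext (by show a + (((u - a).val : ℕ) : Fin n) = u; rw [Fin.cast_val_eq_self]; ring)
  have e2 : (⟨a + (((v - a).val : ℕ) : Fin n), hmv⟩ :
      ((arc a k : Finset (Fin n)) : Set (Fin n))) = ⟨v, hv⟩ :=
    Subtype.ext (by show a + (((v - a).val : ℕ) : Fin n) = v; rw [Fin.cast_val_eq_self]; ring)
  rw [e1] at h1
  rw [e2] at h2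
  exact h1.symm.trans h2

lemma val_ne_last [NeZero n] (hn : 3 ≤ n) {S : Finset (Fin n)} {a : Fin n}
    (ha1 : a - 1 ∉ S) {u : Fin n} (hu : u ∈ S) : (u - a).val ≠ n - 1 := by
  intro h
  apply ha1
  have h01 : ((a - 1 - a : Fin n) : ℕ) = n - 1 := by
    rw [show a - 1 - a = 0 - 1 by ring, Fin.sub_def, val_one' hn]
    simp only [Fin.val_zero]
    show (n - 1 + 0) % n = n - 1
    rw [Nat.add_zero, Nat.mod_eq_of_lt (by omega)]
  have : u - a = a - 1 - a := Fin.val_injective (by rw [h, h01])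
  have h2 : u = a - 1 := by linear_combination this
  rwa [← h2]

lemma walk_interval [NeZero n] (hn : 3 ≤ n) {S : Finset (Fin n)} {a : Fin n}
    (ha1 : a - 1 ∉ S) {u v : ((S : Finset (Fin n)) : Set (Fin n))}
    (w : ((SimpleGraph.cycleGraph n).induce (S : Set (Fin n))).Walk u v) :
    ∀ j : ℕ, (((v : Fin n) - a).val ≤ j ∧ j ≤ ((u : Fin n) - a).val)
        ∨ (((u : Fin n) - a).val ≤ j ∧ j ≤ ((v : Fin n) - a).val) →
      a + (j : Fin n) ∈ S := by
  induction w with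
  | nil =>
    rename_i x
    intro j hj
    have : j = ((x : Fin n) - a).val := by omega
    subst this
    rw [Fin.cast_val_eq_self, show a + ((x : Fin n) - a) = (x : Fin n) by ring]
    exact Finset.mem_coe.mp x.2
  | @cons x y z hadj w ih =>
    intro j hj
    have hxS : (x : Fin n) ∈ S := Finset.mem_coe.mp x.2
    have hyS : (y : Fin n) ∈ S := Finset.mem_coe.mp y.2
    have hxlt : ((x : Fin n) - a).val < n := Fin.is_lt _
    have hylt : ((y : Fin n) - a).val < n := Fin.is_lt _
    have hxne := val_ne_last hn ha1 hxS
    have hyne := val_ne_last hn ha1 hyS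
    have hadj' : (y : Fin n) = (x : Fin n) - 1 ∨ (y : Fin n) = (x : Fin n) + 1 := by
      rw [induce_adj, adj_iff hn] at hadj
      exact hadj
    have hstep : ((y : Fin n) - a).val + 1 = ((x : Fin n) - a).val
        ∨ ((x : Fin n) - a).val + 1 = ((y : Fin n) - a).val := by
      rcases hadj' with h | h
      · left
        have hx1 : 1 ≤ ((x : Fin n) - a).val := by
          rcases Nat.eq_zero_or_pos ((x : Fin n) - a).val with h0 | h1
          · exfalso
            have : (x : Fin n) = a := by
              have h3 : (x : Fin n) - a = 0 := Fin.val_injective (by simp [h0])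
              linear_combination h3
            rw [this] at h
            rw [h] at hyS
            exact ha1 hyS
          · exact h1
        rw [h, show (x : Fin n) - 1 - a = ((x : Fin n) - a) - 1 by ring,
          val_sub_one' hn hx1]
        omega
      · right
        rw [h, show (x : Fin n) + 1 - a = ((x : Fin n) - a) + 1 by ring,
          val_add_one' hn (by omega)]
    have hcases : j = ((x : Fin n) - a).val
        ∨ ((((z : Fin n) - a).val ≤ j ∧ j ≤ ((y : Fin n) - a).val)
          ∨ (((y : Fin n) - a).val ≤ j ∧ j ≤ ((z : Fin n) - a).val)) := by
      omega
    rcases hcases with rfl | h2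
    · rw [Fin.cast_val_eq_self, show a + ((x : Fin n) - a) = (x : Fin n) by ring]
      exact hxS
    · exact ih j h2

lemma connected_classify [NeZero n] (hn : 3 ≤ n) {S : Finset (Fin n)} (hne : S.Nonempty)
    (hconn : ((SimpleGraph.cycleGraph n).induce (S : Set (Fin n))).Connected)
    (hS : S ≠ Finset.univ) :
    ∃ a : Fin n, S = arc a S.card := by
  obtain ⟨b, hb⟩ : ∃ b, b ∉ S := by
    by_contra h
    push_neg at h
    exact hS (Finset.eq_univ_iff_forall.mpr h)
  obtain ⟨s0, hs0⟩ := hne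
  have hP : ∃ t : ℕ, b + (t : Fin n) ∈ S := by
    refine ⟨(s0 - b).val, ?_⟩
    rw [Fin.cast_val_eq_self, show b + (s0 - b) = s0 by ring]
    exact hs0
  set t0 := Nat.find hP with ht0def
  have ht0S : b + (t0 : Fin n) ∈ S := Nat.find_spec hP
  have ht0pos : 1 ≤ t0 := by
    rcases Nat.eq_zero_or_pos t0 with h0 | h1
    · exfalso
      rw [h0] at ht0S
      simp at ht0S
      exact hb ht0S
    · exact h1
  set a := b + (t0 : Fin n) with hadef
  have ha1 : a - 1 ∉ S := by
    have he : a - 1 = b + ((t0 - 1 : ℕ) : Fin n) := by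
      rw [hadef, Nat.cast_sub ht0pos]
      push_cast
      ring
    rw [he]
    exact Nat.find_min hP (by omega)
  have haS : a ∈ S := ht0S
  have key : ∀ u ∈ S, ∀ j ≤ (u - a).val, a + (j : Fin n) ∈ S := by
    intro u hu j hj
    obtain ⟨w⟩ := hconn.preconnected ⟨u, Finset.mem_coe.mpr hu⟩ ⟨a, Finset.mem_coe.mpr haS⟩
    refine walk_interval hn ha1 w j (Or.inl ⟨?_, hj⟩)
    simp
  classical
  set I := S.image (fun u => (u - a).val) with hIdef
  have hinj : ∀ u ∈ S, ∀ v ∈ S, (u - a).val = (v - a).val → u = v := by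
    intro u _ v _ h
    have h2 : u - a = v - a := Fin.val_injective h
    have := congrArg (fun t => t + a) h2
    simpa using this
  have hcardI : I.card = S.card := Finset.card_image_of_injOn (fun u hu v hv h => hinj u hu v hv h)
  have hmemval : ∀ {j : ℕ}, j < n → (((j : Fin n) + a - a)).val = j := by
    intro j hjn
    rw [show (j : Fin n) + a - a = (j : Fin n) by ring, natCast_val j hjn]
  have hIdc : ∀ i ∈ I, ∀ j ≤ i, j ∈ I := by
    intro i hi j hj
    obtain ⟨u, hu, rfl⟩ := Finset.mem_image.mp hi
    have hjn : j < n := lt_of_le_of_lt hj (Fin.is_lt _)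
    refine Finset.mem_image.mpr ⟨a + (j : Fin n), key u hu j hj, ?_⟩
    rw [show a + (j : Fin n) - a = (j : Fin n) by ring, natCast_val j hjn]
  have hIsub : I ⊆ Finset.range I.card := by
    intro i hi
    rw [Finset.mem_range]
    have hsub : Finset.range (i + 1) ⊆ I := by
      intro j hj
      rw [Finset.mem_range] at hj
      exact hIdc i hi j (by omega)
    have := Finset.card_le_card hsub
    rw [Finset.card_range] at this
    omega
  have hIeq : I = Finset.range S.card := by
    rw [← hcardI]
    exact Finset.eq_of_subset_of_card_le hIsub (by rw [Finset.card_range])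
  refine ⟨a, ?_⟩
  have hcard_le : S.card ≤ n := by
    have := Finset.card_le_card (Finset.subset_univ S)
    simpa using this
  ext u
  rw [mem_arc hcard_le]
  constructor
  · intro hu
    have : (u - a).val ∈ I := Finset.mem_image.mpr ⟨u, hu, rfl⟩
    rw [hIeq, Finset.mem_range] at this
    exact this
  · intro hu
    have : (u - a).val ∈ I := by rw [hIeq, Finset.mem_range]; exact hu
    obtain ⟨v, hv, hveq⟩ := Finset.mem_image.mp this
    have : v = u := by
      have h2 : v - a = u - a := Fin.val_injective hveq
      linear_combination h2
    rwa [← this]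

lemma arc_inj [NeZero n] (hn : 3 ≤ n) {a a' : Fin n} {k : ℕ} (hk1 : 1 ≤ k) (hk : k ≤ n - 1)
    (h : arc a k = arc a' k) : a = a' := by
  have hkn : k ≤ n := by omega
  have ha' : a' ∈ arc a k := h ▸ arc_start_mem a' hk1 hkn
  set i := (a' - a).val with hidef
  have hi : i < k := (mem_arc hkn).mp ha'
  rcases Nat.eq_zero_or_pos i with h0 | h1
  · have h2 : a' - a = 0 := Fin.val_injective (by rw [← hidef, h0]; simp)
    linear_combination -h2
  · exfalso
    have hsub : a' - 1 ∈ arc a k := by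
      rw [mem_arc hkn, show a' - 1 - a = (a' - a) - 1 by ring, val_sub_one' hn (by omega)]
      omega
    rw [h, mem_arc hkn, show a' - 1 - a' = 0 - 1 by ring] at hsub
    have h01 : ((0 - 1 : Fin n) : ℕ) = n - 1 := by
      rw [Fin.sub_def, val_one' hn]
      simp only [Fin.val_zero]
      show (n - 1 + 0) % n = n - 1
      rw [Nat.add_zero, Nat.mod_eq_of_lt (by omega)]
    rw [h01] at hsub
    omega

lemma univ_connected (hn : 3 ≤ n) :
    ((SimpleGraph.cycleGraph n).induce ((Finset.univ : Finset (Fin n)) : Set (Fin n))).Connected := by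
  obtain ⟨m, rfl⟩ : ∃ m, n = m + 1 := ⟨n - 1, by omega⟩
  rw [Finset.coe_univ]
  exact (SimpleGraph.induceUnivIso (SimpleGraph.cycleGraph (m + 1))).connected_iff.mpr
    SimpleGraph.cycleGraph_connected

end Stmt9Aux2


open Stmt9Aux Stmt9Aux2

set_option maxHeartbeats 1000000 in
/-- `da` of the cycle graph `Cₙ`, `n ≥ 3`. -/
theorem stmt9 (n : ℕ) (hn : 3 ≤ n) :
    da (SimpleGraph.cycleGraph n)
      = (n : Polynomial (Polynomial ℤ)) * X * Polynomial.C (Polynomial.X ^ (n - 2))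
        + (n : Polynomial (Polynomial ℤ)) * Polynomial.C (Polynomial.X ^ n)
            * ∑ i ∈ Finset.Icc 2 (n - 1), X ^ i
        + X ^ n * Polynomial.C (Polynomial.X ^ (n + 2)) := by
  haveI : NeZero n := ⟨by omega⟩
  haveI : Nonempty (Fin n) := ⟨0⟩
  have hiff : ∀ S : Finset (Fin n),
      (S.Nonempty ∧ ((SimpleGraph.cycleGraph n).induce (S : Set (Fin n))).Connected)
      ↔ S ∈ insert Finset.univ
          (((Finset.Icc 1 (n-1)) ×ˢ (Finset.univ : Finset (Fin n))).image
            fun p => arc p.2 p.1) := by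
    intro S
    rw [Finset.mem_insert, Finset.mem_image]
    constructor
    · rintro ⟨hne, hconn⟩
      by_cases hS : S = Finset.univ
      · exact Or.inl hS
      · obtain ⟨a, ha⟩ := connected_classify hn hne hconn hS
        refine Or.inr ⟨(S.card, a), ?_, ha.symm⟩
        rw [Finset.mem_product, Finset.mem_Icc]
        have hlt : S.card < n := by
          have := (Finset.card_lt_iff_ne_univ S).mpr hS
          rwa [Fintype.card_fin] at this
        exact ⟨⟨hne.card_pos, by omega⟩, Finset.mem_univ a⟩
    · rintro (rfl | ⟨⟨k, a⟩, hmem, rfl⟩)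
      · exact ⟨Finset.univ_nonempty, univ_connected hn⟩
      · rw [Finset.mem_product, Finset.mem_Icc] at hmem
        obtain ⟨⟨hk1, hk2⟩, -⟩ := hmem
        exact ⟨⟨a, arc_start_mem a hk1 (by omega)⟩, arc_connected hn a hk1 hk2⟩
  rw [da]
  refine Eq.trans (Finset.sum_congr
    (g := fun S => if S ∈ insert Finset.univ
          (((Finset.Icc 1 (n-1)) ×ˢ (Finset.univ : Finset (Fin n))).image
            fun p => arc p.2 p.1) then
        (Polynomial.monomial S.card)
          ((Polynomial.monomial (fy (SimpleGraph.cycleGraph n) S)) (1:ℤ))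
      else 0) rfl ?_) ?_
  · intro S _
    beta_reduce
    by_cases hc : S.Nonempty ∧ ((SimpleGraph.cycleGraph n).induce (S : Set (Fin n))).Connected
    · rw [if_pos hc, if_pos ((hiff S).mp hc)]
    · rw [if_neg hc, if_neg (fun hA => hc ((hiff S).mpr hA))]
  rw [Finset.sum_ite_mem]
  rw [Finset.inter_eq_right.mpr (fun S _ => Finset.mem_powerset.mpr (Finset.subset_univ S))]
  have hnotmem : Finset.univ ∉ ((Finset.Icc 1 (n-1)) ×ˢ (Finset.univ : Finset (Fin n))).image
      (fun p => arc p.2 p.1) := by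
    intro h
    obtain ⟨⟨k, a⟩, hmem, heq⟩ := Finset.mem_image.mp h
    rw [Finset.mem_product, Finset.mem_Icc] at hmem
    have h1 : (arc a k).card = k := card_arc a (by omega)
    rw [heq] at h1
    rw [Finset.card_univ, Fintype.card_fin] at h1
    omega
  rw [Finset.sum_insert hnotmem]
  rw [Finset.sum_image (by
    rintro ⟨k, a⟩ hka ⟨k', a'⟩ hka' heq
    rw [Finset.mem_coe, Finset.mem_product, Finset.mem_Icc] at hka hka'
    dsimp only at heq
    have h1 : k = k' := by
      have e1 : (arc a k).card = k := card_arc a (by omega)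
      have e2 : (arc a' k').card = k' := card_arc a' (by omega)
      rw [heq, e2] at e1
      exact e1.symm
    subst h1
    have h2 : a = a' := arc_inj hn hka.1.1 hka.1.2 heq
    rw [h2])]
  rw [Finset.sum_product]
  have hsplit : Finset.Icc 1 (n - 1) = insert 1 (Finset.Icc 2 (n - 1)) := by
    ext i
    rw [Finset.mem_Icc, Finset.mem_insert, Finset.mem_Icc]
    omega
  rw [hsplit, Finset.sum_insert (by rw [Finset.mem_Icc]; omega)]
  have e0 : (Polynomial.monomial (Finset.univ : Finset (Fin n)).card)
        ((Polynomial.monomial (fy (SimpleGraph.cycleGraph n) (Finset.univ : Finset (Fin n)))) (1:ℤ))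
      = X ^ n * Polynomial.C (Polynomial.X ^ (n + 2)) := by
    rw [Finset.card_univ, Fintype.card_fin, fy_univ hn, ← Polynomial.X_pow_eq_monomial,
      ← Polynomial.C_mul_X_pow_eq_monomial]
    ring
  have e1 : (∑ a : Fin n, (Polynomial.monomial (arc a 1).card)
        ((Polynomial.monomial (fy (SimpleGraph.cycleGraph n) (arc a 1))) (1:ℤ)))
      = (n : Polynomial (Polynomial ℤ)) * X * Polynomial.C (Polynomial.X ^ (n - 2)) := by
    rw [Finset.sum_congr rfl (fun a _ => by
      rw [card_arc a (by omega), fy_arc_one hn a])]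
    rw [Finset.sum_const, Finset.card_univ, Fintype.card_fin, nsmul_eq_mul,
      ← Polynomial.X_pow_eq_monomial, ← Polynomial.C_mul_X_pow_eq_monomial, pow_one]
    ring
  have e2 : (∑ k ∈ Finset.Icc 2 (n - 1), ∑ a : Fin n, (Polynomial.monomial (arc a k).card)
        ((Polynomial.monomial (fy (SimpleGraph.cycleGraph n) (arc a k))) (1:ℤ)))
      = (n : Polynomial (Polynomial ℤ)) * Polynomial.C (Polynomial.X ^ n)
          * ∑ i ∈ Finset.Icc 2 (n - 1), X ^ i := by
    rw [Finset.mul_sum]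
    apply Finset.sum_congr rfl
    intro k hk
    rw [Finset.mem_Icc] at hk
    rw [Finset.sum_congr rfl (fun a _ => by
      rw [card_arc a (by omega), fy_arc hn a hk.1 hk.2])]
    rw [Finset.sum_const, Finset.card_univ, Fintype.card_fin, nsmul_eq_mul,
      ← Polynomial.X_pow_eq_monomial, ← Polynomial.C_mul_X_pow_eq_monomial]
    ring
  rw [e0, e1, e2]
  ring
end

section
/- A simple graph G on n vertices is Δ-regular if and only if the polynomial in y given by the coefficient of x^1 in da(G; x, y) equals n·y^{n−Δ}. -/
open Polynomial Finset

open scoped Classical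

variable {V : Type*}

lemma nbr [Fintype V] (G : SimpleGraph V) (v : V) :
    (({v} : Finset V)ᶜ.filter (fun u => G.Adj v u)) = G.neighborFinset v := by
  ext a
  simp only [mem_filter, mem_compl, mem_singleton, SimpleGraph.mem_neighborFinset]
  exact ⟨fun h => h.2, fun h => ⟨fun e => (G.ne_of_adj h (e.symm ▸ rfl)).elim, h⟩⟩

lemma conn1 [Fintype V] (G : SimpleGraph V) (v : V) :
    (G.induce (({v} : Finset V) : Set V)).Connected := by
  rw [Finset.coe_singleton]
  refine ⟨fun a b => ?_⟩
  have : a = b := Subsingleton.elim a b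
  exact this ▸ SimpleGraph.Reachable.refl a

lemma fy_singleton [Fintype V] (G : SimpleGraph V) (v : V) :
    fy G {v} = Fintype.card V - G.degree v := by
  unfold fy
  rw [Finset.coe_singleton, Set.image_singleton, csInf_singleton, nbr,
    Finset.filter_singleton, if_neg G.irrefl, Finset.card_empty, zero_add]
  rfl

lemma coeff_one_da [Fintype V] (G : SimpleGraph V) :
    (da G).coeff 1 = ∑ v : V, Polynomial.X ^ (Fintype.card V - G.degree v) := by
  unfold da
  rw [Polynomial.finset_sum_coeff]
  have key : ∀ S ∈ (Finset.univ : Finset V).powerset,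
      (if S.Nonempty ∧ (G.induce (S : Set V)).Connected then
        Polynomial.monomial S.card (Polynomial.monomial (fy G S) (1 : ℤ))
      else 0).coeff 1
      = if S.card = 1 then Polynomial.monomial (fy G S) (1 : ℤ) else 0 := by
    intro S _
    rcases eq_or_ne S.card 1 with h1 | h1
    · obtain ⟨v, rfl⟩ := Finset.card_eq_one.mp h1
      rw [if_pos ⟨Finset.singleton_nonempty v, conn1 G v⟩, Polynomial.coeff_monomial]
    · rw [if_neg h1]
      split
      · rw [Polynomial.coeff_monomial, if_neg h1]
      · simp
  rw [Finset.sum_congr rfl key, ← Finset.sum_filter]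
  have hfilt : (Finset.univ : Finset V).powerset.filter (fun S => S.card = 1)
      = (Finset.univ : Finset V).powersetCard 1 := by
    rw [Finset.powersetCard_eq_filter]
  rw [hfilt, Finset.powersetCard_one, Finset.sum_map]
  refine Finset.sum_congr rfl fun v _ => ?_
  show Polynomial.monomial (fy G {v}) (1 : ℤ) = _
  rw [fy_singleton, ← Polynomial.X_pow_eq_monomial]

/-- `G` is `Δ`-regular iff `[x] da(G;x,y) = n·y^{n-Δ}`. -/
theorem stmt12 [Fintype V] (G : SimpleGraph V) (Δ : ℕ) (hΔ : Δ ≤ Fintype.card V - 1) :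
    G.IsRegularOfDegree Δ ↔
      (da G).coeff 1
        = (Fintype.card V : Polynomial ℤ) * Polynomial.X ^ (Fintype.card V - Δ) := by
  rw [coeff_one_da]
  constructor
  · intro hreg
    rw [Finset.sum_congr rfl (fun u _ => by rw [hreg u]), Finset.sum_const,
      Finset.card_univ, nsmul_eq_mul]
  · intro h v
    by_contra hv
    have hdeg : G.degree v < Fintype.card V := G.degree_lt_card_verts v
    have hk : Fintype.card V - Δ ≠ Fintype.card V - G.degree v := by omega
    have h2 := congrArg (fun p : Polynomial ℤ =>
      p.coeff (Fintype.card V - G.degree v)) h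
    simp only [Polynomial.finset_sum_coeff, Polynomial.coeff_natCast_mul,
      Polynomial.coeff_X_pow] at h2
    rw [if_neg (Ne.symm hk), mul_zero] at h2
    have hpos := Finset.single_le_sum
      (f := fun u => if Fintype.card V - G.degree v
        = Fintype.card V - G.degree u then (1:ℤ) else 0)
      (fun u _ => by split <;> norm_num) (Finset.mem_univ v)
    simp only [if_pos rfl] at hpos
    rw [h2] at hpos
    norm_num at hpos
end

section
/- Let G be a Δ-regular simple graph on n vertices and S ⊆ V(G) a nonempty subset of size k inducing a connected subgraph. Then S is (the vertex set of) a connected component of G if and only if f_y(S) = Δ + n, i.e., S contributes the term x^k y^{Δ+n} to da(G; x, y). -/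
open Polynomial Finset

open scoped Classical

variable {V : Type*}

/-- In a `Δ`-regular graph, a nonempty set `S` of size `k` inducing a connected subgraph
is a connected component iff `f_y(S) = Δ + n`. -/
theorem stmt13 [Fintype V] (G : SimpleGraph V) (Δ : ℕ) (hreg : G.IsRegularOfDegree Δ)
    (S : Finset V) (k : ℕ) (hS : S.Nonempty) (hcard : S.card = k)
    (hconn : (G.induce (S : Set V)).Connected) :
    (∀ u ∈ S, ∀ v ∉ S, ¬ G.Adj u v) ↔ fy G S = Δ + Fintype.card V := by
  classical
  set n := Fintype.card V with hn
  obtain ⟨u0, hu0⟩ := hS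
  have hn1 : 1 ≤ n := Fintype.card_pos_iff.mpr ⟨u0⟩
  have key : ∀ u ∈ S,
      (S.filter (fun v => G.Adj u v)).card + (Sᶜ.filter (fun v => G.Adj u v)).card = Δ := by
    intro u hu
    rw [← hreg u, SimpleGraph.degree]
    rw [← Finset.card_union_of_disjoint
      (Finset.disjoint_filter_filter disjoint_compl_right)]
    congr 1
    ext v
    by_cases hv : v ∈ S <;>
      simp [SimpleGraph.mem_neighborFinset, hv]
  have hb_le : ∀ u, (Sᶜ.filter (fun v => G.Adj u v)).card ≤ n :=
    fun u => le_trans (Finset.card_le_card (Finset.filter_subset _ _))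
      (Finset.card_le_univ _)
  constructor
  · intro h
    have hb0 : ∀ u ∈ S, (Sᶜ.filter (fun v => G.Adj u v)).card = 0 := by
      intro u hu
      rw [Finset.card_eq_zero, Finset.filter_eq_empty_iff]
      intro v hv
      exact h u hu v (Finset.mem_compl.mp hv)
    have hval : ∀ u ∈ S, (S.filter (fun v => G.Adj u v)).card + n
        - (Sᶜ.filter (fun v => G.Adj u v)).card = Δ + n := by
      intro u hu
      have := key u hu
      have := hb0 u hu
      omega
    apply le_antisymm
    · exact Nat.sInf_le ⟨u0, hu0, hval u0 hu0⟩
    · apply le_csInf (Set.Nonempty.image _ ⟨u0, hu0⟩)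
      rintro m ⟨u, hu, rfl⟩
      exact (hval u hu).ge
  · intro h u hu v hv hadj
    have hb1 : 1 ≤ (Sᶜ.filter (fun w => G.Adj u w)).card := by
      apply Finset.card_pos.mpr
      exact ⟨v, Finset.mem_filter.mpr ⟨Finset.mem_compl.mpr hv, hadj⟩⟩
    have hlt : (S.filter (fun w => G.Adj u w)).card + n
        - (Sᶜ.filter (fun w => G.Adj u w)).card < Δ + n := by
      have := key u hu
      have := hb_le u
      omega
    have hle : fy G S ≤ (S.filter (fun w => G.Adj u w)).card + n
        - (Sᶜ.filter (fun w => G.Adj u w)).card := Nat.sInf_le ⟨u, hu, rfl⟩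
    omega
end

section
/- Let G be a connected Δ-regular simple graph on 2Δ vertices. Then G is isomorphic to the complete bipartite graph K_{Δ,Δ} if and only if the number of 3-element vertex subsets inducing a connected subgraph equals 2Δ · C(Δ, 2). -/
open Polynomial Finset

open scoped Classical

variable {V : Type*}

section AuxStmt17

private lemma bridge {V : Type*} (s : Finset (Finset V)) (p : Set V → Prop)
    [DecidablePred p] :
    (((do let a ← s; pure ((a : Finset V) : Set V)) : Finset (Set V)).filter p).card
      = (s.filter (fun a : Finset V => p (a : Set V))).card := by
  classical
  have h1 : ((do let a ← s; pure ((a : Finset V) : Set V)) : Finset (Set V))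
      = s.image (fun a : Finset V => (a : Set V)) := by
    ext x
    simp [Bind.bind, Finset.image]
  rw [h1, Finset.filter_image,
    Finset.card_image_of_injective _ (fun a b hab => Finset.coe_injective hab)]

variable {V : Type*} [Fintype V] {G : SimpleGraph V}

private lemma isolated_reachable {W : Type*} {G' : SimpleGraph W} {x y : W}
    (h : ∀ z, ¬ G'.Adj x z) (hr : G'.Reachable x y) : x = y := by
  obtain ⟨w⟩ := hr
  cases w with
  | nil => rfl
  | cons h' _ => exact absurd h' (h _)

private lemma center_of_connected3 {V : Type*} {G : SimpleGraph V} {S : Finset V}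
    (h3 : S.card = 3) (hc : (G.induce (S : Set V)).Connected) :
    ∃ v ∈ S, ∀ w ∈ S, w ≠ v → G.Adj v w := by
  classical
  obtain ⟨a, b, c, hab, hac, hbc, rfl⟩ := Finset.card_eq_three.mp h3
  have ha : a ∈ ({a,b,c} : Finset V) := by simp
  have hb : b ∈ ({a,b,c} : Finset V) := by simp
  have hcm : c ∈ ({a,b,c} : Finset V) := by simp
  by_contra hno
  push_neg at hno
  -- helper: an isolated vertex contradicts connectivity
  have key : ∀ x ∈ ({a,b,c} : Finset V), ∀ y ∈ ({a,b,c} : Finset V),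
      x ≠ y → (∀ z ∈ ({a,b,c} : Finset V), ¬ G.Adj x z) → False := by
    intro x hx y hy hxy hiso
    have hr := hc.preconnected ⟨x, by simpa using hx⟩ ⟨y, by simpa using hy⟩
    have : (⟨x, by simpa using hx⟩ : (({a,b,c} : Finset V) : Set V)) = ⟨y, by simpa using hy⟩ := by
      refine isolated_reachable ?_ hr
      rintro ⟨z, hz⟩ hadj
      exact hiso z (by simpa using hz) hadj
    exact hxy (by simpa using this)
  have hA := hno a ha
  have hB := hno b hb
  have hC := hno c hcm
  -- extract: a is not adjacent to both b and c, etc.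
  by_cases pab : G.Adj a b
  · -- then ¬ Adj a c (from hA) and ¬ Adj b c (from hB); c isolated
    have nac : ¬ G.Adj a c := by
      intro h'; obtain ⟨w, hw, hwa, hnadj⟩ := hA
      rcases (by simpa using hw : w = a ∨ w = b ∨ w = c) with rfl|rfl|rfl
      · exact hwa rfl
      · exact hnadj pab
      · exact hnadj h'
    have nbc : ¬ G.Adj b c := by
      intro h'; obtain ⟨w, hw, hwb, hnadj⟩ := hB
      rcases (by simpa using hw : w = a ∨ w = b ∨ w = c) with rfl|rfl|rfl
      · exact hnadj pab.symm
      · exact hwb rfl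
      · exact hnadj h'
    refine key c hcm a ha (Ne.symm hac) ?_
    intro z hz hadj
    rcases (by simpa using hz : z = a ∨ z = b ∨ z = c) with rfl|rfl|rfl
    · exact nac hadj.symm
    · exact nbc hadj.symm
    · exact G.loopless.irrefl _ hadj
  · by_cases pac : G.Adj a c
    · have nbc : ¬ G.Adj b c := by
        intro h'; obtain ⟨w, hw, hwc, hnadj⟩ := hC
        rcases (by simpa using hw : w = a ∨ w = b ∨ w = c) with rfl|rfl|rfl
        · exact hnadj pac.symm
        · exact hnadj h'.symm
        · exact hwc rfl
      refine key b hb a ha (Ne.symm hab) ?_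
      intro z hz hadj
      rcases (by simpa using hz : z = a ∨ z = b ∨ z = c) with rfl|rfl|rfl
      · exact pab hadj.symm
      · exact G.loopless.irrefl _ hadj
      · exact nbc hadj
    · refine key a ha b hb hab ?_
      intro z hz hadj
      rcases (by simpa using hz : z = a ∨ z = b ∨ z = c) with rfl|rfl|rfl
      · exact G.loopless.irrefl _ hadj
      · exact pab hadj
      · exact pac hadj

private lemma connected3_of_center {V : Type*} {G : SimpleGraph V} {v a b : V}
    (hab : a ≠ b) (hva : G.Adj v a) (hvb : G.Adj v b) :
    (G.induce (({v,a,b} : Finset V) : Set V)).Connected := by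
  classical
  have hv : v ∈ (({v,a,b} : Finset V) : Set V) := by simp
  have : Nonempty (({v,a,b} : Finset V) : Set V) := ⟨⟨v, hv⟩⟩
  refine ⟨fun x y => ?_⟩
  have reach : ∀ x : (({v,a,b} : Finset V) : Set V),
      (G.induce _).Reachable x ⟨v, hv⟩ := by
    rintro ⟨z, hz⟩
    rcases (by simpa using hz : z = v ∨ z = a ∨ z = b) with rfl|rfl|rfl
    · rfl
    · exact SimpleGraph.Adj.reachable (by simpa using hva.symm)
    · exact SimpleGraph.Adj.reachable (by simpa using hvb.symm)
  exact (reach x).trans (reach y).symm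

private lemma maps_to (x : (v : V) × Finset V)
    (hx : x ∈ Finset.univ.sigma (fun v => (G.neighborFinset v).powersetCard 2)) :
    insert x.1 x.2 ∈ ((Finset.univ : Finset V).powersetCard 3).filter
      (fun (S : Finset V) => (G.induce (S : Set V)).Connected) := by
  obtain ⟨v, p⟩ := x
  simp only [Finset.mem_sigma, Finset.mem_powersetCard] at hx
  obtain ⟨-, hsub, hp2⟩ := hx
  obtain ⟨a, b, hab, rfl⟩ := Finset.card_eq_two.mp hp2
  have hva : G.Adj v a := by
    have := hsub (by simp : a ∈ ({a,b} : Finset V)); simpa using this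
  have hvb : G.Adj v b := by
    have := hsub (by simp : b ∈ ({a,b} : Finset V)); simpa using this
  have hv : v ∉ ({a,b} : Finset V) := by
    simp only [Finset.mem_insert, Finset.mem_singleton]
    rintro (rfl|rfl); exacts [G.loopless.irrefl _ hva, G.loopless.irrefl _ hvb]
  rw [Finset.mem_filter, Finset.mem_powersetCard]
  refine ⟨⟨Finset.subset_univ _, ?_⟩, ?_⟩
  · rw [Finset.card_insert_of_notMem hv, hp2]
  · exact connected3_of_center hab hva hvb

private lemma surj_on {S : Finset V}
    (hS : S ∈ ((Finset.univ : Finset V).powersetCard 3).filter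
      (fun (S : Finset V) => (G.induce (S : Set V)).Connected))
    (hcent : ∃ v ∈ S, ∀ w ∈ S, w ≠ v → G.Adj v w) :
    ∃ x ∈ Finset.univ.sigma (fun v => (G.neighborFinset v).powersetCard 2),
      insert x.1 x.2 = S := by
  simp only [Finset.mem_filter, Finset.mem_powersetCard] at hS
  obtain ⟨⟨-, h3⟩, -⟩ := hS
  obtain ⟨v, hv, hcv⟩ := hcent
  refine ⟨⟨v, S.erase v⟩, ?_, Finset.insert_erase hv⟩
  simp only [Finset.mem_sigma, Finset.mem_powersetCard, Finset.mem_univ, true_and]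
  constructor
  · intro w hw
    rw [Finset.mem_erase] at hw
    exact (SimpleGraph.mem_neighborFinset _ _ _).mpr (hcv w hw.2 hw.1)
  · rw [Finset.card_erase_of_mem hv, h3]

private lemma card_B {Δ : ℕ} (hreg : G.IsRegularOfDegree Δ) :
    (Finset.univ.sigma (fun v : V => (G.neighborFinset v).powersetCard 2)).card
      = Fintype.card V * Δ.choose 2 := by
  rw [Finset.card_sigma]
  have : ∀ v : V, ((G.neighborFinset v).powersetCard 2).card = Δ.choose 2 := by
    intro v
    rw [Finset.card_powersetCard]
    congr 1
    rw [G.card_neighborFinset_eq_degree]; exact hreg v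
  rw [Finset.sum_congr rfl (fun v _ => this v), Finset.sum_const, Finset.card_univ,
    smul_eq_mul]

private lemma count_of_tfree {Δ : ℕ} (hreg : G.IsRegularOfDegree Δ)
    (tf : ∀ ⦃a b c : V⦄, G.Adj a b → G.Adj a c → G.Adj b c → False) :
    (((Finset.univ : Finset V).powersetCard 3).filter
      (fun (S : Finset V) => (G.induce (S : Set V)).Connected)).card
      = Fintype.card V * Δ.choose 2 := by
  rw [← card_B hreg]
  symm
  refine Finset.card_bij (fun x _ => insert x.1 x.2) maps_to ?_ ?_
  · rintro ⟨v, p⟩ hx ⟨v', p'⟩ hx' heq0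
    replace heq0 : insert v p = insert v' p' := heq0
    simp only [Finset.mem_sigma, Finset.mem_powersetCard, Finset.mem_univ, true_and] at hx hx'
    obtain ⟨hsub, hp2⟩ := hx
    obtain ⟨hsub', hp2'⟩ := hx'
    have hvp : v ∉ p := fun h => G.loopless.irrefl v (by simpa using hsub h)
    have hvp' : v' ∉ p' := fun h => G.loopless.irrefl v' (by simpa using hsub' h)
    have hvv : v = v' := by
      by_contra hne
      have hv'S : v' ∈ insert v p := heq0 ▸ Finset.mem_insert_self v' p'
      have hv'p : v' ∈ p := by
        rcases Finset.mem_insert.mp hv'S with h|h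
        · exact absurd h.symm hne
        · exact h
      have hadjvv' : G.Adj v v' := by simpa using hsub hv'p
      have finish : ∀ c ∈ p, c ≠ v' → False := by
        intro c hcp hcv'
        have hadjvc : G.Adj v c := by simpa using hsub hcp
        have hcS : c ∈ insert v' p' := heq0 ▸ Finset.mem_insert_of_mem hcp
        have hcp' : c ∈ p' := by
          rcases Finset.mem_insert.mp hcS with h|h
          · exact absurd h hcv'
          · exact h
        have hadjv'c : G.Adj v' c := by simpa using hsub' hcp'
        exact tf hadjvv' hadjvc hadjv'c
      obtain ⟨a, b, hab, hpab⟩ := Finset.card_eq_two.mp hp2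
      have : v' = a ∨ v' = b := by
        rw [hpab] at hv'p; simpa using hv'p
      rcases this with rfl|rfl
      · exact finish b (by rw [hpab]; simp) (Ne.symm hab)
      · exact finish a (by rw [hpab]; simp) hab
    subst hvv
    have : p = p' := by
      have h1 : (insert v p).erase v = p := Finset.erase_insert hvp
      have h2 : (insert v p').erase v = p' := Finset.erase_insert hvp'
      rw [← h1, ← h2, heq0]
    subst this
    rfl
  · intro S hS
    obtain ⟨x, hx, hxe⟩ := surj_on hS (center_of_connected3 (by
      have := Finset.mem_filter.mp hS
      exact (Finset.mem_powersetCard.mp this.1).2) (Finset.mem_filter.mp hS).2)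
    exact ⟨x, hx, hxe⟩

private lemma tfree_of_count {Δ : ℕ} (hreg : G.IsRegularOfDegree Δ)
    (hcount : (((Finset.univ : Finset V).powersetCard 3).filter
      (fun (S : Finset V) => (G.induce (S : Set V)).Connected)).card
      = Fintype.card V * Δ.choose 2) :
    ∀ ⦃a b c : V⦄, G.Adj a b → G.Adj a c → G.Adj b c → False := by
  intro a b c hab hac hbc
  have hcardle : (Finset.univ.sigma (fun v : V => (G.neighborFinset v).powersetCard 2)).card
      ≤ (((Finset.univ : Finset V).powersetCard 3).filter
      (fun (S : Finset V) => (G.induce (S : Set V)).Connected)).card := by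
    rw [hcount, card_B hreg]
  have hsurj : ∀ S ∈ ((Finset.univ : Finset V).powersetCard 3).filter
      (fun (S : Finset V) => (G.induce (S : Set V)).Connected),
      ∃ x, ∃ (hx : x ∈ Finset.univ.sigma
        (fun v : V => (G.neighborFinset v).powersetCard 2)),
        (fun (x : (v : V) × Finset V) (_ : x ∈ _) => insert x.1 x.2) x hx = S := by
    intro S hS
    obtain ⟨x, hx, hxe⟩ := surj_on hS (center_of_connected3
      (Finset.mem_powersetCard.mp (Finset.mem_filter.mp hS).1).2
      (Finset.mem_filter.mp hS).2)
    exact ⟨x, hx, hxe⟩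
  have hinj := Finset.inj_on_of_surj_on_of_card_le
    (fun (x : (v : V) × Finset V) (_ : x ∈ Finset.univ.sigma
        (fun v : V => (G.neighborFinset v).powersetCard 2)) => insert x.1 x.2)
    maps_to hsurj hcardle
  have hx1 : (⟨a, {b, c}⟩ : (v : V) × Finset V) ∈ Finset.univ.sigma
      (fun v : V => (G.neighborFinset v).powersetCard 2) := by
    simp only [Finset.mem_sigma, Finset.mem_powersetCard, Finset.mem_univ, true_and]
    constructor
    · intro z hz
      rcases Finset.mem_insert.mp hz with rfl|hz
      · simpa using hab
      · simp only [Finset.mem_singleton] at hz; subst hz; simpa using hac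
    · rw [Finset.card_insert_of_notMem (by simpa using hbc.ne), Finset.card_singleton]
  have hx2 : (⟨b, {a, c}⟩ : (v : V) × Finset V) ∈ Finset.univ.sigma
      (fun v : V => (G.neighborFinset v).powersetCard 2) := by
    simp only [Finset.mem_sigma, Finset.mem_powersetCard, Finset.mem_univ, true_and]
    constructor
    · intro z hz
      rcases Finset.mem_insert.mp hz with rfl|hz
      · simpa using hab.symm
      · simp only [Finset.mem_singleton] at hz; subst hz; simpa using hbc
    · rw [Finset.card_insert_of_notMem (by simpa using hac.ne), Finset.card_singleton]
  have heq : insert a ({b, c} : Finset V) = insert b ({a, c} : Finset V) := by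
    ext z; simp only [Finset.mem_insert, Finset.mem_singleton]; tauto
  have := hinj hx1 hx2 heq
  have : a = b := congrArg Sigma.fst this
  exact hab.ne this

private lemma iso_to_tfree {Δ : ℕ}
    (f : G ≃g completeBipartiteGraph (Fin Δ) (Fin Δ)) :
    ∀ ⦃a b c : V⦄, G.Adj a b → G.Adj a c → G.Adj b c → False := by
  intro a b c hab hac hbc
  have h1 : (completeBipartiteGraph (Fin Δ) (Fin Δ)).Adj (f a) (f b) := f.map_rel_iff.mpr hab
  have h2 : (completeBipartiteGraph (Fin Δ) (Fin Δ)).Adj (f a) (f c) := f.map_rel_iff.mpr hac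
  have h3 : (completeBipartiteGraph (Fin Δ) (Fin Δ)).Adj (f b) (f c) := f.map_rel_iff.mpr hbc
  rcases hfa : f a with x|x <;> rcases hfb : f b with y|y <;> rcases hfc : f c with z|z <;>
    rw [hfa, hfb] at h1 <;> rw [hfa, hfc] at h2 <;> rw [hfb, hfc] at h3 <;>
    simp [completeBipartiteGraph] at h1 h2 h3

private lemma tfree_to_iso {Δ : ℕ} (hΔ : 1 ≤ Δ)
    (hreg : G.IsRegularOfDegree Δ) (hcard : Fintype.card V = 2 * Δ)
    (tf : ∀ ⦃a b c : V⦄, G.Adj a b → G.Adj a c → G.Adj b c → False) :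
    Nonempty (G ≃g completeBipartiteGraph (Fin Δ) (Fin Δ)) := by
  have hNcard : ∀ x : V, (G.neighborFinset x).card = Δ := by
    intro x; rw [G.card_neighborFinset_eq_degree]; exact hreg x
  have hV : Nonempty V := by
    rw [← Fintype.card_pos_iff, hcard]; omega
  obtain ⟨u⟩ := hV
  have hNu : (G.neighborFinset u).Nonempty := by
    rw [← Finset.card_pos, hNcard]; omega
  obtain ⟨v, hv⟩ := hNu
  have huv : G.Adj u v := by simpa using hv
  have hdisj : Disjoint (G.neighborFinset u) (G.neighborFinset v) := by
    rw [Finset.disjoint_left]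
    intro w hw1 hw2
    exact tf huv (by simpa using hw1) (by simpa using hw2)
  have hunion : G.neighborFinset u ∪ G.neighborFinset v = Finset.univ := by
    apply Finset.eq_univ_of_card
    rw [Finset.card_union_of_disjoint hdisj, hNcard, hNcard, hcard]; ring
  have hmem : ∀ x : V, x ∈ G.neighborFinset u ∨ x ∈ G.neighborFinset v := by
    intro x
    have : x ∈ G.neighborFinset u ∪ G.neighborFinset v := hunion ▸ Finset.mem_univ x
    simpa using this
  -- x ∈ N(u) → N(x) = N(v)
  have keyu : ∀ x ∈ G.neighborFinset u, G.neighborFinset x = G.neighborFinset v := by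
    intro x hx
    have hux : G.Adj u x := by simpa using hx
    apply Finset.eq_of_subset_of_card_le
    · intro y hy
      have hxy : G.Adj x y := by simpa using hy
      have : y ∉ G.neighborFinset u := by
        intro hyu
        exact tf hux (by simpa using hyu) hxy
      rcases hmem y with h|h
      · exact absurd h this
      · exact h
    · rw [hNcard, hNcard]
  have keyv : ∀ x ∈ G.neighborFinset v, G.neighborFinset x = G.neighborFinset u := by
    intro x hx
    have hvx : G.Adj v x := by simpa using hx
    apply Finset.eq_of_subset_of_card_le
    · intro y hy
      have hxy : G.Adj x y := by simpa using hy
      have : y ∉ G.neighborFinset v := by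
        intro hyv
        exact tf hvx (by simpa using hyv) hxy
      rcases hmem y with h|h
      · exact h
      · exact absurd h this
    · rw [hNcard, hNcard]
  have hadj : ∀ x y : V, G.Adj x y ↔
      (x ∈ G.neighborFinset u ∧ y ∈ G.neighborFinset v) ∨
      (x ∈ G.neighborFinset v ∧ y ∈ G.neighborFinset u) := by
    intro x y
    constructor
    · intro h
      rcases hmem x with hx|hx
      · left; exact ⟨hx, by rw [← keyu x hx]; simpa using h⟩
      · right; exact ⟨hx, by rw [← keyv x hx]; simpa using h⟩
    · rintro (⟨hx, hy⟩|⟨hx, hy⟩)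
      · have := keyu x hx
        have : y ∈ G.neighborFinset x := this ▸ hy
        simpa using this
      · have := keyv x hx
        have : y ∈ G.neighborFinset x := this ▸ hy
        simpa using this
  set Nu := G.neighborFinset u with hNudef
  set Nv := G.neighborFinset v with hNvdef
  have e1 : {x // x ∈ Nu} ≃ Fin Δ := Finset.equivFinOfCardEq (hNcard u)
  have e2 : {x // x ∈ Nv} ≃ Fin Δ := Finset.equivFinOfCardEq (hNcard v)
  have hmem' : ∀ x : V, x ∉ Nu → x ∈ Nv := by
    intro x hx; rcases hmem x with h|h; exacts [absurd h hx, h]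
  refine ⟨⟨⟨fun x => dite (x ∈ Nu) (fun h => Sum.inl (e1 ⟨x, h⟩))
        (fun h => Sum.inr (e2 ⟨x, hmem' x h⟩)),
      Sum.elim (fun i => (e1.symm i).1) (fun i => (e2.symm i).1), ?_, ?_⟩, ?_⟩⟩
  · intro x
    by_cases h : x ∈ Nu
    · simp [h]
    · simp [h]
  · intro s
    rcases s with i | i
    · have h : ((e1.symm i : {x // x ∈ Nu}) : V) ∈ Nu := (e1.symm i).2
      simp only [Sum.elim_inl, dif_pos h]
      have he : (⟨(e1.symm i).1, h⟩ : {x // x ∈ Nu}) = e1.symm i := Subtype.ext rfl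
      simp [h]
    · have h2 : ((e2.symm i : {x // x ∈ Nv}) : V) ∈ Nv := (e2.symm i).2
      have h : ((e2.symm i : {x // x ∈ Nv}) : V) ∉ Nu :=
        fun hh => Finset.disjoint_left.mp hdisj hh h2
      simp only [Sum.elim_inr, dif_neg h]
      have he : (⟨(e2.symm i).1, h2⟩ : {x // x ∈ Nv}) = e2.symm i := Subtype.ext rfl
      simp [h]
  · intro x y
    have hdj : ∀ {z : V}, z ∈ Nu → z ∉ Nv := fun hz => Finset.disjoint_left.mp hdisj hz
    simp only [Equiv.coe_fn_mk]
    by_cases hx : x ∈ Nu <;> by_cases hy : y ∈ Nu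
    · rw [dif_pos hx, dif_pos hy, hadj x y]
      simp [hdj hx, hdj hy]
    · rw [dif_pos hx, dif_neg hy, hadj x y]
      simp [hx, hmem' y hy]
    · rw [dif_neg hx, dif_pos hy, hadj x y]
      simp [hy, hmem' x hx]
    · rw [dif_neg hx, dif_neg hy, hadj x y]
      simp [hx, hy]

end AuxStmt17

/-- A connected `Δ`-regular graph on `2Δ` vertices is isomorphic to `K_{Δ,Δ}` iff the number
of 3-element vertex subsets inducing a connected subgraph equals `2Δ · C(Δ, 2)`. -/
theorem stmt17 [Fintype V] (G : SimpleGraph V) (Δ : ℕ) (hΔ : 1 ≤ Δ)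
    (hreg : G.IsRegularOfDegree Δ) (hconn : G.Connected)
    (hcard : Fintype.card V = 2 * Δ) :
    Nonempty (G ≃g completeBipartiteGraph (Fin Δ) (Fin Δ)) ↔
      ((((Finset.univ : Finset V).powersetCard 3).filter
          (fun S => (G.induce (S : Set V)).Connected)).card
        = 2 * Δ * Δ.choose 2) := by
  rw [bridge ((Finset.univ : Finset V).powersetCard 3)
    (fun S : Set V => (SimpleGraph.induce S G).Connected), Finset.filter_congr_decidable]
  constructor
  · rintro ⟨f⟩
    have tf := iso_to_tfree f
    exact (count_of_tfree hreg tf).trans (by rw [hcard])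
  · intro h
    have tf := tfree_of_count hreg (by rw [hcard]; exact h)
    exact tfree_to_iso hΔ hreg hcard tf
end
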